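/- arXiv:math/9712241 — 5 statements merged into one kernel-verified Lean document; each statement's English description precedes it below -/
import Mathlib

section
/- Let M be a real antisymmetric n×n matrix and define X(π) = Σ_{1≤i<j≤n} M_{π(i),π(j)} for π ∈ S_n. Then for every π ∈ S_n, (1/n) Σ_{i=1}^n X(π∘c_i) = (1 − 2/n)·X(π), where c_i is the cycle mapping i → i+1 → ⋯ → n → i and fixing 1,…,i−1. Equivalently, for the pair (W, W') with W = X(π)/√Var(X) and W' = X(π∘c_I)/√Var(X) with I uniform on {1,…,n}, one has E^W(W') = (1 − 2/n)·W. -/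
/-- The cycle `c_i` on `Fin n` mapping `i → i+1 → ⋯ → n-1 → i` and fixing `0,…,i-1`
(0-indexed version of the cycle on `{1,…,n}` mapping `i → i+1 → ⋯ → n → i`). -/
def cyc {n : ℕ} (i : Fin n) : Equiv.Perm (Fin n) :=
  (Fin.revPerm.trans ((Fin.cycleRange i.rev).trans Fin.revPerm)).symm

/-- The number of descents of a permutation of `Fin n`: the number of indices `i`
with `i+1 < n` and `π(i) > π(i+1)`. -/
def descents {n : ℕ} (π : Equiv.Perm (Fin n)) : ℕ :=
  (Finset.univ.filter fun i : Fin (n - 1) =>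
    π ⟨i.1 + 1, by have := i.2; omega⟩ < π ⟨i.1, by have := i.2; omega⟩).card

/-- The number of inversions of a permutation of `Fin n`: the number of pairs
`i < j` with `π(i) > π(j)`. -/
def inversions {n : ℕ} (π : Equiv.Perm (Fin n)) : ℕ :=
  (Finset.univ.filter fun p : Fin n × Fin n => p.1 < p.2 ∧ π p.2 < π p.1).card

/-- `X(π) = ∑_{i<j} M_{π(i),π(j)}`. -/
def Xstat {n : ℕ} (M : Fin n → Fin n → ℝ) (π : Equiv.Perm (Fin n)) : ℝ :=
  ∑ p ∈ Finset.univ.filter (fun p : Fin n × Fin n => p.1 < p.2), M (π p.1) (π p.2)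

/-- Expectation of a statistic under the uniform measure on the symmetric group. -/
noncomputable def permExp {n : ℕ} (f : Equiv.Perm (Fin n) → ℝ) : ℝ :=
  (∑ π : Equiv.Perm (Fin n), f π) / (n.factorial : ℝ)

/-- Variance of a statistic under the uniform measure on the symmetric group. -/
noncomputable def permVar {n : ℕ} (f : Equiv.Perm (Fin n) → ℝ) : ℝ :=
  permExp (fun π => (f π - permExp f) ^ 2)

lemma cyc_symm_val {n : ℕ} (i j : Fin n) :
    (((cyc i).symm j : Fin n) : ℕ) =
      if (j : ℕ) < i then (j:ℕ) else if (j:ℕ) = i then n - 1 else (j:ℕ) - 1 := by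
  have hn : 0 < n := i.pos
  obtain ⟨m, rfl⟩ : ∃ m, n = m + 1 := ⟨n - 1, by omega⟩
  have hi := i.2
  have hj := j.2
  unfold cyc
  simp only [Equiv.symm_symm, Equiv.trans_apply, Fin.revPerm_apply]
  rcases lt_trichotomy (j:ℕ) (i:ℕ) with h | h | h
  · rw [Fin.cycleRange_of_gt (by simp only [Fin.lt_def, Fin.val_rev]; omega)]
    rw [Fin.rev_rev]
    simp [h]
  · have : j = i := Fin.ext h
    subst this
    rw [Fin.cycleRange_self]
    simp only [Fin.val_rev, Fin.val_zero]
    simp [h]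
  · rw [Fin.cycleRange_of_lt (by simp only [Fin.lt_def, Fin.val_rev]; omega)]
    have h1 : ((Fin.rev j + 1 : Fin (m+1)) : ℕ) = (m+1) - (j:ℕ) := by
      rw [Fin.val_add_one_of_lt]
      · simp only [Fin.val_rev]; omega
      · simp only [Fin.lt_def, Fin.val_rev, Fin.val_last]; omega
    simp only [Fin.val_rev, h1]
    rw [if_neg (by omega), if_neg (by omega)]
    omega

lemma Xstat_mul {n : ℕ} (M : Fin n → Fin n → ℝ) (π σ : Equiv.Perm (Fin n)) :
    Xstat M (π * σ) =
      ∑ q : Fin n × Fin n, if σ.symm q.1 < σ.symm q.2 then M (π q.1) (π q.2) else 0 := by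
  unfold Xstat
  rw [Finset.sum_filter]
  exact Fintype.sum_equiv (Equiv.prodCongr σ σ) _ _ (fun p => by simp)

lemma Xstat_eq {n : ℕ} (M : Fin n → Fin n → ℝ) (π : Equiv.Perm (Fin n)) :
    Xstat M π = ∑ q : Fin n × Fin n, if q.1 < q.2 then M (π q.1) (π q.2) else 0 := by
  unfold Xstat; rw [Finset.sum_filter]

lemma Xstat_cyc {n : ℕ} (M : Fin n → Fin n → ℝ) (hM : ∀ i j, M j i = - M i j)
    (π : Equiv.Perm (Fin n)) (i : Fin n) :
    Xstat M (π * cyc i) = Xstat M π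
      - 2 * ∑ j ∈ Finset.univ.filter (fun j => i < j), M (π i) (π j) := by
  rw [Xstat_mul, Xstat_eq]
  have key : ∀ q : Fin n × Fin n,
      (if (cyc i).symm q.1 < (cyc i).symm q.2 then M (π q.1) (π q.2) else 0)
      = (if q.1 < q.2 then M (π q.1) (π q.2) else 0)
        + ((if q.1 = i then (if i < q.2 then -(M (π i) (π q.2)) else 0) else 0)
          + (if q.2 = i then (if i < q.1 then -(M (π i) (π q.1)) else 0) else 0)) := by
    rintro ⟨a, b⟩
    have ha := cyc_symm_val i a
    have hb := cyc_symm_val i b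
    have ha2 := a.2
    have hb2 := b.2
    have hi2 := i.2
    simp only [Fin.lt_def, Fin.ext_iff]
    rw [ha, hb]
    clear ha hb
    split_ifs <;>
      first
        | ring1
        | (exfalso; omega)
        | (have hbi : b = i := Fin.ext (by omega); subst hbi;
           have := hM (π b) (π a); linarith)
        | (have hai : a = i := Fin.ext (by omega); subst hai; ring1)
  simp_rw [key]
  rw [Finset.sum_add_distrib, Finset.sum_add_distrib]
  have e1 : (∑ q : Fin n × Fin n,
        if q.1 = i then (if i < q.2 then -(M (π i) (π q.2)) else 0) else 0)
      = -∑ j ∈ Finset.univ.filter (fun j => i < j), M (π i) (π j) := by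
    rw [Fintype.sum_prod_type]
    have pull : ∀ x : Fin n, (∑ y : Fin n,
          if (x, y).1 = i then (if i < (x, y).2 then -(M (π i) (π (x, y).2)) else 0) else 0)
        = if x = i then (-∑ j ∈ Finset.univ.filter (fun j => i < j), M (π i) (π j)) else 0 := by
      intro x
      split_ifs with h <;> simp [h, ← Finset.sum_filter]
    rw [Finset.sum_congr rfl (fun x _ => pull x), Finset.sum_ite_eq' Finset.univ i
      (fun _ => -∑ j ∈ Finset.univ.filter (fun j => i < j), M (π i) (π j))]
    simp
  have e2 : (∑ q : Fin n × Fin n,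
        if q.2 = i then (if i < q.1 then -(M (π i) (π q.1)) else 0) else 0)
      = -∑ j ∈ Finset.univ.filter (fun j => i < j), M (π i) (π j) := by
    rw [Fintype.sum_prod_type_right]
    have pull : ∀ y : Fin n, (∑ x : Fin n,
          if (x, y).2 = i then (if i < (x, y).1 then -(M (π i) (π (x, y).1)) else 0) else 0)
        = if y = i then (-∑ j ∈ Finset.univ.filter (fun j => i < j), M (π i) (π j)) else 0 := by
      intro y
      split_ifs with h <;> simp [h, ← Finset.sum_filter]
    rw [Finset.sum_congr rfl (fun y _ => pull y), Finset.sum_ite_eq' Finset.univ i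
      (fun _ => -∑ j ∈ Finset.univ.filter (fun j => i < j), M (π i) (π j))]
    simp
  rw [e1, e2, ← Xstat_eq]
  ring

lemma sum_tails {n : ℕ} (M : Fin n → Fin n → ℝ) (π : Equiv.Perm (Fin n)) :
    ∑ i : Fin n, ∑ j ∈ Finset.univ.filter (fun j => i < j), M (π i) (π j)
      = Xstat M π := by
  rw [Xstat_eq, Fintype.sum_prod_type]
  exact Finset.sum_congr rfl fun i _ => (Finset.sum_filter _ _)

/-- For an antisymmetric matrix `M` and `X(π) = ∑_{i<j} M_{π(i),π(j)}`,
for every permutation `π`, `(1/n) ∑_{i=1}^n X(π∘c_i) = (1 − 2/n)·X(π)` where `c_i` moves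
position `i` to the end.  (Hence `E^W(W') = (1 − 2/n)·W` for the normalized pair.) -/
theorem average_moveToEnd_eq {n : ℕ} (M : Fin n → Fin n → ℝ)
    (hM : ∀ i j, M j i = - M i j) (π : Equiv.Perm (Fin n)) :
    (1 / (n : ℝ)) * ∑ i : Fin n, Xstat M (π * cyc i)
      = (1 - 2 / (n : ℝ)) * Xstat M π := by
  rcases Nat.eq_zero_or_pos n with hn | hn
  · subst hn
    simp [Xstat]
  · have hn' : (n : ℝ) ≠ 0 := Nat.cast_ne_zero.mpr hn.ne'
    have e : ∑ i : Fin n, Xstat M (π * cyc i)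
        = (n : ℝ) * Xstat M π - 2 * Xstat M π := by
      simp_rw [Xstat_cyc M hM π]
      rw [Finset.sum_sub_distrib, ← Finset.mul_sum, sum_tails]
      simp [mul_comm]
    rw [e]
    field_simp
end

section
/- Let M be a real antisymmetric n×n matrix, let π be uniform on S_n, and define X(π) = Σ_{1≤i<j≤n} M_{π(i),π(j)}. Then E(X) = 0 and Var(X) = (Σ_{1≤i<j≤n} M_{i,j}² + Σ_{i=1}^n (A_i − B_i)²)/3, where A_i = Σ_{j>i} M_{i,j} and B_i = Σ_{h<i} M_{h,i}. -/
open Finset Equiv in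
noncomputable def sg {n : ℕ} (a b : Fin n) (π : Equiv.Perm (Fin n)) : ℝ :=
  if π⁻¹ a < π⁻¹ b then 1 else -1

lemma sg_sq {n : ℕ} (a b : Fin n) (π : Equiv.Perm (Fin n)) : sg a b π * sg a b π = 1 := by
  unfold sg; split_ifs <;> norm_num

lemma sg_symm {n : ℕ} {a b : Fin n} (h : b ≠ a) (π : Equiv.Perm (Fin n)) :
    sg a b π = - sg b a π := by
  unfold sg
  have hab : π⁻¹ b ≠ π⁻¹ a := fun H => h (π⁻¹.injective H)
  rcases hab.lt_or_gt with h1 | h1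
  · rw [if_neg (asymm h1), if_pos h1]
  · rw [if_pos h1, if_neg (asymm h1)]; norm_num

lemma sg_mul_left {n : ℕ} (a b : Fin n) (σ π : Equiv.Perm (Fin n)) :
    sg a b (σ * π) = sg (σ⁻¹ a) (σ⁻¹ b) π := by
  unfold sg; rw [mul_inv_rev]; rfl

lemma sum_comp_left {n : ℕ} (σ : Equiv.Perm (Fin n)) (f : Equiv.Perm (Fin n) → ℝ) :
    ∑ π : Equiv.Perm (Fin n), f (σ * π) = ∑ π : Equiv.Perm (Fin n), f π :=
  Equiv.sum_comp (Equiv.mulLeft σ) f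

lemma sum_sg {n : ℕ} {a b : Fin n} (h : a ≠ b) :
    ∑ π : Equiv.Perm (Fin n), sg a b π = 0 := by
  have key := sum_comp_left (Equiv.swap a b) (sg a b)
  simp only [sg_mul_left, Equiv.swap_inv, Equiv.swap_apply_left, Equiv.swap_apply_right] at key
  have h2 : ∀ π : Equiv.Perm (Fin n), sg b a π = - sg a b π := fun π => sg_symm h π
  rw [Finset.sum_congr rfl (fun π _ => h2 π), Finset.sum_neg_distrib] at key
  linarith

lemma g_cycle {n : ℕ} {x y z : Fin n} (hxy : x ≠ y) (hxz : x ≠ z) (hyz : y ≠ z) :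
    (if x < y then (1:ℝ) else -1) * (if x < z then 1 else -1)
    + (if z < x then (1:ℝ) else -1) * (if z < y then 1 else -1)
    + (if y < z then (1:ℝ) else -1) * (if y < x then 1 else -1) = 1 := by
  have h1 : x.1 ≠ y.1 := fun h => hxy (Fin.val_injective h)
  have h2 : x.1 ≠ z.1 := fun h => hxz (Fin.val_injective h)
  have h3 : y.1 ≠ z.1 := fun h => hyz (Fin.val_injective h)
  simp only [Fin.lt_def]
  split_ifs <;> first | (exfalso; omega) | norm_num

lemma sum_sg_shared {n : ℕ} {a b c : Fin n} (hab : a ≠ b) (hac : a ≠ c) (hbc : b ≠ c) :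
    ∑ π : Equiv.Perm (Fin n), sg a b π * sg a c π = (n.factorial : ℝ) / 3 := by
  set σ : Equiv.Perm (Fin n) := Equiv.swap a b * Equiv.swap b c with hσ
  have hinv : σ⁻¹ = Equiv.swap b c * Equiv.swap a b := by rw [hσ, mul_inv_rev]; simp
  have hσa : σ⁻¹ a = c := by
    rw [hinv]; simp only [Equiv.Perm.mul_apply, Equiv.swap_apply_left]
  have hσb : σ⁻¹ b = a := by
    rw [hinv]; simp only [Equiv.Perm.mul_apply, Equiv.swap_apply_right,
      Equiv.swap_apply_of_ne_of_ne hab hac]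
  have hσc : σ⁻¹ c = b := by
    rw [hinv]; simp only [Equiv.Perm.mul_apply, Equiv.swap_apply_right,
      Equiv.swap_apply_of_ne_of_ne hac.symm hbc.symm]
  have E1 : ∑ π : Equiv.Perm (Fin n), sg a b π * sg a c π
      = ∑ π : Equiv.Perm (Fin n), sg c a π * sg c b π := by
    rw [← sum_comp_left σ (fun π => sg a b π * sg a c π)]
    simp only [sg_mul_left, hσa, hσb, hσc]
  have E2 : ∑ π : Equiv.Perm (Fin n), sg c a π * sg c b π
      = ∑ π : Equiv.Perm (Fin n), sg b c π * sg b a π := by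
    rw [← sum_comp_left σ (fun π => sg c a π * sg c b π)]
    simp only [sg_mul_left, hσa, hσb, hσc]
  have key : (3 : ℝ) * ∑ π : Equiv.Perm (Fin n), sg a b π * sg a c π
      = (n.factorial : ℝ) := by
    have h3 : (3 : ℝ) * ∑ π : Equiv.Perm (Fin n), sg a b π * sg a c π
        = ∑ π : Equiv.Perm (Fin n),
            (sg a b π * sg a c π + sg c a π * sg c b π + sg b c π * sg b a π) := by
      rw [Finset.sum_add_distrib, Finset.sum_add_distrib, ← E2, ← E1]; ring
    rw [h3]
    have hone : ∀ π : Equiv.Perm (Fin n),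
        sg a b π * sg a c π + sg c a π * sg c b π + sg b c π * sg b a π = 1 := by
      intro π
      unfold sg
      exact g_cycle (fun h => hab (π⁻¹.injective h)) (fun h => hac (π⁻¹.injective h))
        (fun h => hbc (π⁻¹.injective h))
    rw [Finset.sum_congr rfl (fun π _ => hone π), Finset.sum_const, Finset.card_univ,
      Fintype.card_perm, Fintype.card_fin, nsmul_eq_mul, mul_one]
  linarith

lemma sum_sg_disjoint {n : ℕ} {a b c d : Fin n} (hab : a ≠ b)
    (hca : c ≠ a) (hcb : c ≠ b) (hda : d ≠ a) (hdb : d ≠ b) :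
    ∑ π : Equiv.Perm (Fin n), sg a b π * sg c d π = 0 := by
  have key := sum_comp_left (Equiv.swap a b) (fun π => sg a b π * sg c d π)
  simp only [sg_mul_left, Equiv.swap_inv, Equiv.swap_apply_left, Equiv.swap_apply_right,
    Equiv.swap_apply_of_ne_of_ne hca hcb, Equiv.swap_apply_of_ne_of_ne hda hdb] at key
  have h2 : ∀ π : Equiv.Perm (Fin n), sg b a π * sg c d π = - (sg a b π * sg c d π) := by
    intro π; rw [sg_symm hab]; ring
  rw [Finset.sum_congr rfl (fun π _ => h2 π), Finset.sum_neg_distrib] at key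
  linarith

lemma key_T {n : ℕ} {M : Fin n → Fin n → ℝ} (hM : ∀ i j, M j i = - M i j)
    (a b c d : Fin n) :
    M a b * M c d * (∑ π : Equiv.Perm (Fin n), sg a b π * sg c d π)
      = (n.factorial : ℝ) / 3 * (M a b * M c d *
        ((if a = c then (1:ℝ) else 0) + (if b = d then (1:ℝ) else 0)
          - (if a = d then (1:ℝ) else 0) - (if b = c then (1:ℝ) else 0)
          + (if a = c then (1:ℝ) else 0) * (if b = d then (1:ℝ) else 0)
          - (if a = d then (1:ℝ) else 0) * (if b = c then (1:ℝ) else 0))) := by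
  have hdiag : ∀ x, M x x = 0 := fun x => by have := hM x x; linarith
  by_cases hab : a = b
  · subst hab; simp [hdiag]
  by_cases hcd : c = d
  · subst hcd; simp [hdiag]
  by_cases hac : a = c
  · subst hac
    by_cases hbd : b = d
    · subst hbd
      have hT : (∑ π : Equiv.Perm (Fin n), sg a b π * sg a b π) = (n.factorial : ℝ) := by
        simp [sg_sq, Finset.sum_const, Finset.card_univ, Fintype.card_perm]
      rw [hT]
      have h1 : b ≠ a := Ne.symm hab
      simp [hab, h1]; ring
    · have hT := sum_sg_shared hab hcd hbd
      rw [hT]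
      have h1 : b ≠ a := Ne.symm hab
      simp [hab, hbd, hcd, h1]; ring
  · by_cases hbd : b = d
    · subst hbd
      have hpt : ∀ π : Equiv.Perm (Fin n), sg a b π * sg c b π = sg b a π * sg b c π := by
        intro π
        rw [sg_symm (Ne.symm hab), sg_symm (Ne.symm hcd)]; ring
      have hT : (∑ π : Equiv.Perm (Fin n), sg a b π * sg c b π) = (n.factorial : ℝ) / 3 := by
        rw [Finset.sum_congr rfl (fun π _ => hpt π)]
        exact sum_sg_shared (Ne.symm hab) (Ne.symm hcd) hac
      rw [hT]
      have h1 : ¬ a = b := hab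
      have h2 : ¬ b = c := fun h => hcd (h ▸ rfl)
      simp [hac, h1, h2]; ring
    · by_cases had : a = d
      · subst had
        by_cases hbc : b = c
        · subst hbc
          have hpt : ∀ π : Equiv.Perm (Fin n), sg a b π * sg b a π = -1 := by
            intro π
            rw [sg_symm hab]
            rw [show sg a b π * - sg a b π = -(sg a b π * sg a b π) by ring, sg_sq]
          have hT : (∑ π : Equiv.Perm (Fin n), sg a b π * sg b a π) = -(n.factorial : ℝ) := by
            rw [Finset.sum_congr rfl (fun π _ => hpt π)]
            simp [Finset.sum_const, Finset.card_univ, Fintype.card_perm]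
          rw [hT, hM a b]
          have h1 : ¬ b = a := Ne.symm hab
          simp [hab, h1]; ring
        · have hpt : ∀ π : Equiv.Perm (Fin n), sg a b π * sg c a π = -(sg a b π * sg a c π) := by
            intro π; rw [sg_symm hac]; ring
          have hT : (∑ π : Equiv.Perm (Fin n), sg a b π * sg c a π)
              = -((n.factorial : ℝ) / 3) := by
            rw [Finset.sum_congr rfl (fun π _ => hpt π), Finset.sum_neg_distrib,
              sum_sg_shared hab hac hbc]
          rw [hT]
          have h1 : ¬ b = a := Ne.symm hab
          simp [hac, hbc, h1]; ring
      · by_cases hbc : b = c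
        · subst hbc
          have hpt : ∀ π : Equiv.Perm (Fin n), sg a b π * sg b d π = -(sg b a π * sg b d π) := by
            intro π; rw [sg_symm (Ne.symm hab)]; ring
          have hT : (∑ π : Equiv.Perm (Fin n), sg a b π * sg b d π)
              = -((n.factorial : ℝ) / 3) := by
            rw [Finset.sum_congr rfl (fun π _ => hpt π), Finset.sum_neg_distrib,
              sum_sg_shared (Ne.symm hab) hcd had]
          rw [hT]
          simp [hac, hcd, had, hab]; ring
        · have hT := sum_sg_disjoint hab (Ne.symm hac) (Ne.symm hbc) (Ne.symm had) (Ne.symm hbd)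
          rw [hT]
          simp [hac, hbd, had, hbc]

lemma quad_eval {n : ℕ} {M : Fin n → Fin n → ℝ} (hM : ∀ i j, M j i = - M i j) :
    (∑ a : Fin n, ∑ b : Fin n, ∑ c : Fin n, ∑ d : Fin n,
      M a b * M c d *
        ((if a = c then (1:ℝ) else 0) + (if b = d then (1:ℝ) else 0)
          - (if a = d then (1:ℝ) else 0) - (if b = c then (1:ℝ) else 0)
          + (if a = c then (1:ℝ) else 0) * (if b = d then (1:ℝ) else 0)
          - (if a = d then (1:ℝ) else 0) * (if b = c then (1:ℝ) else 0)))
    = 4 * (∑ a : Fin n, (∑ b : Fin n, M a b)^2) + 2 * ∑ a : Fin n, ∑ b : Fin n, (M a b)^2 := by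
  set R : Fin n → ℝ := fun a => ∑ b : Fin n, M a b with hR
  have hcol : ∀ a : Fin n, (∑ c : Fin n, M c a) = - R a := by
    intro a
    rw [hR]
    simp only []
    rw [← Finset.sum_neg_distrib]
    exact Finset.sum_congr rfl fun c _ => hM a c
  have inner : ∀ a b : Fin n,
      (∑ c : Fin n, ∑ d : Fin n,
        M a b * M c d *
          ((if a = c then (1:ℝ) else 0) + (if b = d then (1:ℝ) else 0)
            - (if a = d then (1:ℝ) else 0) - (if b = c then (1:ℝ) else 0)
            + (if a = c then (1:ℝ) else 0) * (if b = d then (1:ℝ) else 0)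
            - (if a = d then (1:ℝ) else 0) * (if b = c then (1:ℝ) else 0)))
      = M a b * (2 * R a - 2 * R b + 2 * M a b) := by
    intro a b
    have step : ∀ c : Fin n, (∑ d : Fin n,
        M a b * M c d *
          ((if a = c then (1:ℝ) else 0) + (if b = d then (1:ℝ) else 0)
            - (if a = d then (1:ℝ) else 0) - (if b = c then (1:ℝ) else 0)
            + (if a = c then (1:ℝ) else 0) * (if b = d then (1:ℝ) else 0)
            - (if a = d then (1:ℝ) else 0) * (if b = c then (1:ℝ) else 0)))
        = M a b * ((if a = c then (1:ℝ) else 0) * R c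
            + M c b
            - M c a
            - (if b = c then (1:ℝ) else 0) * R c
            + (if a = c then (1:ℝ) else 0) * M c b
            - (if b = c then (1:ℝ) else 0) * M c a) := by
      intro c
      simp only [mul_add, mul_sub, Finset.sum_add_distrib, Finset.sum_sub_distrib]
      simp only [mul_ite, ite_mul, mul_one, mul_zero, one_mul, zero_mul,
        Finset.sum_ite_irrel, Finset.sum_ite_eq, Finset.sum_ite_eq', Finset.mem_univ, if_true,
        Finset.sum_const_zero, ← Finset.mul_sum]
      rfl
    rw [Finset.sum_congr rfl fun c _ => step c]
    simp only [← Finset.mul_sum]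
    congr 1
    simp only [Finset.sum_add_distrib, Finset.sum_sub_distrib]
    simp only [ite_mul, one_mul, zero_mul, Finset.sum_ite_eq, Finset.sum_ite_eq',
      Finset.mem_univ, if_true]
    rw [hcol a, hcol b, hM a b]
    ring
  rw [Finset.sum_congr rfl fun a _ => Finset.sum_congr rfl fun b _ => inner a b]
  have exp1 : ∀ a b : Fin n, M a b * (2 * R a - 2 * R b + 2 * M a b)
      = 2 * (M a b * R a) - 2 * (M a b * R b) + 2 * (M a b)^2 := by intro a b; ring
  simp only [exp1, Finset.sum_add_distrib, Finset.sum_sub_distrib, ← Finset.mul_sum]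
  have t1 : (∑ a : Fin n, ∑ b : Fin n, M a b * R a) = ∑ a : Fin n, R a ^ 2 := by
    apply Finset.sum_congr rfl
    intro a _
    rw [← Finset.sum_mul]
    rw [hR]
    ring
  have t2 : (∑ a : Fin n, ∑ b : Fin n, M a b * R b) = - ∑ a : Fin n, R a ^ 2 := by
    rw [Finset.sum_comm, ← Finset.sum_neg_distrib]
    apply Finset.sum_congr rfl
    intro b _
    rw [← Finset.sum_mul, hcol b]
    ring
  rw [t1, t2]
  ring

lemma Xstat_ite {n : ℕ} (M : Fin n → Fin n → ℝ) (π : Equiv.Perm (Fin n)) :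
    Xstat M π = ∑ a : Fin n, ∑ b : Fin n, if π⁻¹ a < π⁻¹ b then M a b else 0 := by
  unfold Xstat
  rw [show (∑ a : Fin n, ∑ b : Fin n, if π⁻¹ a < π⁻¹ b then M a b else 0)
      = ∑ q : Fin n × Fin n, if π⁻¹ q.1 < π⁻¹ q.2 then M q.1 q.2 else 0 from
    (Fintype.sum_prod_type
      (f := fun q : Fin n × Fin n => if π⁻¹ q.1 < π⁻¹ q.2 then M q.1 q.2 else 0)).symm]
  rw [← Finset.sum_filter]
  apply Finset.sum_nbij' (i := fun p => (π p.1, π p.2)) (j := fun q => (π⁻¹ q.1, π⁻¹ q.2))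
  · intro p hp
    simp only [Finset.mem_filter, Finset.mem_univ, true_and] at hp ⊢
    simpa using hp
  · intro q hq
    simp only [Finset.mem_filter, Finset.mem_univ, true_and] at hq ⊢
    exact hq
  · intro p _; simp
  · intro q _; simp
  · intro p _; rfl

lemma Xrep {n : ℕ} {M : Fin n → Fin n → ℝ} (hM : ∀ i j, M j i = - M i j)
    (π : Equiv.Perm (Fin n)) :
    2 * Xstat M π = ∑ a : Fin n, ∑ b : Fin n, M a b * sg a b π := by
  have hzero : (∑ a : Fin n, ∑ b : Fin n, M a b) = 0 := by
    have h1 : (∑ a : Fin n, ∑ b : Fin n, M a b) = ∑ a : Fin n, ∑ b : Fin n, M b a :=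
      Finset.sum_comm
    have h2 : (∑ a : Fin n, ∑ b : Fin n, M b a) = - ∑ a : Fin n, ∑ b : Fin n, M a b := by
      rw [← Finset.sum_neg_distrib]
      refine Finset.sum_congr rfl fun a _ => ?_
      rw [← Finset.sum_neg_distrib]
      exact Finset.sum_congr rfl fun b _ => hM a b
    linarith [h1.trans h2]
  have hpt : ∀ a b : Fin n, M a b * sg a b π
      = 2 * (if π⁻¹ a < π⁻¹ b then M a b else 0) - M a b := by
    intro a b; unfold sg; split_ifs <;> ring
  calc 2 * Xstat M π
      = 2 * (∑ a : Fin n, ∑ b : Fin n, if π⁻¹ a < π⁻¹ b then M a b else 0) := by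
        rw [Xstat_ite]
    _ = ∑ a : Fin n, ∑ b : Fin n,
          (2 * (if π⁻¹ a < π⁻¹ b then M a b else 0) - M a b) := by
        simp only [Finset.sum_sub_distrib, Finset.mul_sum]
        rw [show (∑ a : Fin n, ∑ b : Fin n, M a b) = 0 from hzero]
        ring
    _ = ∑ a : Fin n, ∑ b : Fin n, M a b * sg a b π := by
        exact Finset.sum_congr rfl fun a _ => Finset.sum_congr rfl fun b _ => (hpt a b).symm

lemma sum_X_zero {n : ℕ} {M : Fin n → Fin n → ℝ} (hM : ∀ i j, M j i = - M i j) :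
    (∑ π : Equiv.Perm (Fin n), Xstat M π) = 0 := by
  have hdiag : ∀ x, M x x = 0 := fun x => by have := hM x x; linarith
  have h1 : 2 * (∑ π : Equiv.Perm (Fin n), Xstat M π)
      = ∑ π : Equiv.Perm (Fin n), ∑ a : Fin n, ∑ b : Fin n, M a b * sg a b π := by
    rw [Finset.mul_sum]
    exact Finset.sum_congr rfl fun π _ => Xrep hM π
  have h2 : (∑ π : Equiv.Perm (Fin n), ∑ a : Fin n, ∑ b : Fin n, M a b * sg a b π)
      = ∑ a : Fin n, ∑ b : Fin n, M a b * ∑ π : Equiv.Perm (Fin n), sg a b π := by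
    rw [Finset.sum_comm]
    refine Finset.sum_congr rfl fun a _ => ?_
    rw [Finset.sum_comm]
    exact Finset.sum_congr rfl fun b _ => (Finset.mul_sum _ _ _).symm
  have h3 : ∀ a b : Fin n, M a b * (∑ π : Equiv.Perm (Fin n), sg a b π) = 0 := by
    intro a b
    by_cases hab : a = b
    · subst hab; rw [hdiag]; ring
    · rw [sum_sg hab]; ring
  have h4 : (∑ a : Fin n, ∑ b : Fin n, M a b * ∑ π : Equiv.Perm (Fin n), sg a b π) = 0 :=
    Finset.sum_eq_zero fun a _ => Finset.sum_eq_zero fun b _ => h3 a b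
  linarith [h1.trans (h2.trans h4)]

lemma sum_X_sq {n : ℕ} {M : Fin n → Fin n → ℝ} (hM : ∀ i j, M j i = - M i j) :
    (∑ π : Equiv.Perm (Fin n), (Xstat M π)^2)
      = (n.factorial : ℝ) / 3 *
        ((∑ a : Fin n, (∑ b : Fin n, M a b)^2) + (∑ a : Fin n, ∑ b : Fin n, (M a b)^2) / 2) := by
  have h1 : (4 : ℝ) * ∑ π : Equiv.Perm (Fin n), (Xstat M π)^2
      = ∑ π : Equiv.Perm (Fin n),
          (∑ a : Fin n, ∑ b : Fin n, M a b * sg a b π)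
          * (∑ c : Fin n, ∑ d : Fin n, M c d * sg c d π) := by
    rw [Finset.mul_sum]
    refine Finset.sum_congr rfl fun π _ => ?_
    rw [← Xrep hM π]; ring
  have h2 : (∑ π : Equiv.Perm (Fin n),
        (∑ a : Fin n, ∑ b : Fin n, M a b * sg a b π)
        * (∑ c : Fin n, ∑ d : Fin n, M c d * sg c d π))
      = ∑ a : Fin n, ∑ b : Fin n, ∑ c : Fin n, ∑ d : Fin n,
          M a b * M c d * ∑ π : Equiv.Perm (Fin n), sg a b π * sg c d π := by
    have expand : ∀ π : Equiv.Perm (Fin n),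
        (∑ a : Fin n, ∑ b : Fin n, M a b * sg a b π)
        * (∑ c : Fin n, ∑ d : Fin n, M c d * sg c d π)
        = ∑ a : Fin n, ∑ b : Fin n, ∑ c : Fin n, ∑ d : Fin n,
            M a b * M c d * (sg a b π * sg c d π) := by
      intro π
      rw [Finset.sum_mul]
      refine Finset.sum_congr rfl fun a _ => ?_
      rw [Finset.sum_mul]
      refine Finset.sum_congr rfl fun b _ => ?_
      rw [Finset.mul_sum]
      refine Finset.sum_congr rfl fun c _ => ?_
      rw [Finset.mul_sum]
      refine Finset.sum_congr rfl fun d _ => ?_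
      ring
    rw [Finset.sum_congr rfl fun π _ => expand π]
    rw [Finset.sum_comm]
    refine Finset.sum_congr rfl fun a _ => ?_
    rw [Finset.sum_comm]
    refine Finset.sum_congr rfl fun b _ => ?_
    rw [Finset.sum_comm]
    refine Finset.sum_congr rfl fun c _ => ?_
    rw [Finset.sum_comm]
    refine Finset.sum_congr rfl fun d _ => ?_
    exact (Finset.mul_sum _ _ _).symm
  have h3 : (∑ a : Fin n, ∑ b : Fin n, ∑ c : Fin n, ∑ d : Fin n,
        M a b * M c d * ∑ π : Equiv.Perm (Fin n), sg a b π * sg c d π)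
      = (n.factorial : ℝ) / 3 *
        (4 * (∑ a : Fin n, (∑ b : Fin n, M a b)^2)
          + 2 * ∑ a : Fin n, ∑ b : Fin n, (M a b)^2) := by
    rw [Finset.sum_congr rfl fun a _ => Finset.sum_congr rfl fun b _ =>
      Finset.sum_congr rfl fun c _ => Finset.sum_congr rfl fun d _ => key_T hM a b c d]
    simp only [← Finset.mul_sum]
    rw [quad_eval hM]
  have := h1.trans (h2.trans h3)
  linarith

lemma half_sq {n : ℕ} {M : Fin n → Fin n → ℝ} (hM : ∀ i j, M j i = - M i j) :
    (∑ p ∈ Finset.univ.filter (fun p : Fin n × Fin n => p.1 < p.2), (M p.1 p.2) ^ 2)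
      = (∑ a : Fin n, ∑ b : Fin n, (M a b)^2) / 2 := by
  have hdiag : ∀ x, M x x = 0 := fun x => by have := hM x x; linarith
  have split := Finset.sum_filter_add_sum_filter_not Finset.univ
    (fun p : Fin n × Fin n => p.1 < p.2) (fun q => (M q.1 q.2)^2)
  have hgt : (∑ p ∈ Finset.univ.filter (fun p : Fin n × Fin n => ¬ p.1 < p.2), (M p.1 p.2)^2)
      = ∑ p ∈ Finset.univ.filter (fun p : Fin n × Fin n => p.2 < p.1), (M p.1 p.2)^2 := by
    refine (Finset.sum_subset ?_ ?_).symm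
    · intro q hq
      simp only [Finset.mem_filter, Finset.mem_univ, true_and] at hq ⊢
      exact asymm hq
    · intro q hq hq2
      simp only [Finset.mem_filter, Finset.mem_univ, true_and] at hq hq2
      have : q.1 = q.2 := le_antisymm (not_lt.mp hq2) (not_lt.mp hq)
      rw [this, hdiag]; ring
  have hswap : (∑ p ∈ Finset.univ.filter (fun p : Fin n × Fin n => p.2 < p.1), (M p.1 p.2)^2)
      = ∑ p ∈ Finset.univ.filter (fun p : Fin n × Fin n => p.1 < p.2), (M p.1 p.2)^2 := by
    apply Finset.sum_nbij' (i := fun q => (q.2, q.1)) (j := fun q => (q.2, q.1))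
    · intro q hq
      simp only [Finset.mem_filter, Finset.mem_univ, true_and] at hq ⊢
      exact hq
    · intro q hq
      simp only [Finset.mem_filter, Finset.mem_univ, true_and] at hq ⊢
      exact hq
    · intro q _; rfl
    · intro q _; rfl
    · intro q _
      show (M q.1 q.2)^2 = (M q.2 q.1)^2
      rw [hM q.2 q.1]; ring
  have huniv : (∑ q : Fin n × Fin n, (M q.1 q.2)^2) = ∑ a : Fin n, ∑ b : Fin n, (M a b)^2 :=
    Fintype.sum_prod_type (f := fun q : Fin n × Fin n => (M q.1 q.2)^2)
  rw [hgt, hswap] at split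
  rw [huniv] at split
  linarith

lemma rowsum {n : ℕ} {M : Fin n → Fin n → ℝ} (hM : ∀ i j, M j i = - M i j) (i : Fin n) :
    (∑ j ∈ Finset.univ.filter (fun j : Fin n => i < j), M i j)
      - (∑ h ∈ Finset.univ.filter (fun h : Fin n => h < i), M h i)
      = ∑ j : Fin n, M i j := by
  have hdiag : ∀ x, M x x = 0 := fun x => by have := hM x x; linarith
  have split := Finset.sum_filter_add_sum_filter_not Finset.univ
    (fun j : Fin n => i < j) (fun j => M i j)
  have hlt : (∑ j ∈ Finset.univ.filter (fun j : Fin n => ¬ i < j), M i j)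
      = ∑ j ∈ Finset.univ.filter (fun j : Fin n => j < i), M i j := by
    refine (Finset.sum_subset ?_ ?_).symm
    · intro j hj
      simp only [Finset.mem_filter, Finset.mem_univ, true_and] at hj ⊢
      exact asymm hj
    · intro j hj hj2
      simp only [Finset.mem_filter, Finset.mem_univ, true_and] at hj hj2
      have : j = i := le_antisymm (not_lt.mp hj) (not_lt.mp hj2)
      rw [this, hdiag]
  have hB : (∑ h ∈ Finset.univ.filter (fun h : Fin n => h < i), M h i)
      = - ∑ j ∈ Finset.univ.filter (fun j : Fin n => j < i), M i j := by
    rw [← Finset.sum_neg_distrib]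
    exact Finset.sum_congr rfl fun h _ => hM i h
  rw [hlt] at split
  rw [hB]
  linarith

/-- For an antisymmetric matrix `M` and `X(π) = ∑_{i<j} M_{π(i),π(j)}`
with `π` uniform on `S_n`, `E(X) = 0` and
`Var(X) = (∑_{i<j} M_{i,j}² + ∑_i (A_i − B_i)²)/3` where `A_i = ∑_{j>i} M_{i,j}` and
`B_i = ∑_{h<i} M_{h,i}`. -/
theorem mean_zero_and_variance {n : ℕ} (M : Fin n → Fin n → ℝ)
    (hM : ∀ i j, M j i = - M i j) :
    permExp (Xstat M) = 0 ∧
    permVar (Xstat M)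
      = ((∑ p ∈ Finset.univ.filter (fun p : Fin n × Fin n => p.1 < p.2), (M p.1 p.2) ^ 2)
          + ∑ i : Fin n,
            ((∑ j ∈ Finset.univ.filter (fun j : Fin n => i < j), M i j)
              - (∑ h ∈ Finset.univ.filter (fun h : Fin n => h < i), M h i)) ^ 2) / 3 := by
  have hfac : (n.factorial : ℝ) ≠ 0 := Nat.cast_ne_zero.mpr (Nat.factorial_ne_zero n)
  have hE : permExp (Xstat M) = 0 := by
    unfold permExp
    rw [sum_X_zero hM, zero_div]
  refine ⟨hE, ?_⟩
  unfold permVar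
  rw [hE]
  simp only [sub_zero]
  unfold permExp
  rw [show (∑ π : Equiv.Perm (Fin n), (Xstat M π) ^ 2)
      = (n.factorial : ℝ) / 3 *
        ((∑ a : Fin n, (∑ b : Fin n, M a b)^2)
          + (∑ a : Fin n, ∑ b : Fin n, (M a b)^2) / 2) from sum_X_sq hM]
  rw [half_sq hM]
  rw [Finset.sum_congr rfl fun i (_ : i ∈ Finset.univ) => by rw [← rowsum hM i]]
  field_simp
  ring
end

section
/- Let M be a real antisymmetric n×n matrix with X(π) = Σ_{1≤i<j≤n} M_{π(i),π(j)} and Var(X) > 0 (variance over uniform π ∈ S_n). Then, averaging over uniform π ∈ S_n and uniform I ∈ {1,…,n}, E[(X(π∘c_I) − X(π))²] = (4/n)·Var(X); equivalently, for W = X/√Var(X) and W' = X(π∘c_I)/√Var(X), E(W' − W)² = 4/n. -/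
open Finset Equiv

section PermSums
variable {α : Type*} [Fintype α] [DecidableEq α]

theorem sum_perm_eq_zero_of_mul_right_eq_neg (f : Perm α → ℝ) (g : Perm α)
    (hf : ∀ π, f (π * g) = -f π) : ∑ π, f π = 0 := by
  have h := Equiv.sum_comp (Equiv.mulRight g) f
  simp only [Equiv.coe_mulRight, hf, sum_neg_distrib] at h
  linarith

variable (M : α → α → ℝ)

theorem sum_perm_antisymm_eq_zero (hM : ∀ i j, M j i = -M i j) (a b : α) :
    ∑ π : Perm α, M (π a) (π b) = 0 :=
  sum_perm_eq_zero_of_mul_right_eq_neg _ (swap a b) fun π => by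
    simp only [Perm.mul_apply, swap_apply_left, swap_apply_right, hM (π a) (π b)]

theorem sum_perm_antisymm_mul_eq_zero_of_disjoint (hM : ∀ i j, M j i = -M i j) {a b c d : α}
    (hac : a ≠ c) (had : a ≠ d) (hbc : b ≠ c) (hbd : b ≠ d) :
    ∑ π : Perm α, M (π a) (π b) * M (π c) (π d) = 0 :=
  sum_perm_eq_zero_of_mul_right_eq_neg _ (swap c d) fun π => by
    simp only [Perm.mul_apply, swap_apply_left, swap_apply_right, swap_apply_of_ne_of_ne hac had,
      swap_apply_of_ne_of_ne hbc hbd, hM (π c) (π d), mul_neg]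

theorem sum_perm_antisymm_mul_add_eq_zero (hM : ∀ i j, M j i = -M i j) {a b c : α}
    (hab : a ≠ b) (hac : a ≠ c) :
    ∑ π : Perm α, (M (π a) (π b) * M (π b) (π c) + M (π a) (π c) * M (π b) (π c)) = 0 :=
  sum_perm_eq_zero_of_mul_right_eq_neg _ (swap b c) fun π => by
    simp only [Perm.mul_apply, swap_apply_left, swap_apply_right, swap_apply_of_ne_of_ne hab hac,
      hM (π b) (π c)]
    ring

end PermSums

theorem sum_filter_lt_comp {α β R : Type*} [Fintype α] [LinearOrder α] [LinearOrder β]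
    [CommRing R] {σ : α → β} (hσ : Function.Injective σ) (f : α → α → R)
    (hf : ∀ u v, f v u = -f u v) :
    ∑ p ∈ univ.filter (fun p : α × α => σ p.1 < σ p.2), f p.1 p.2 =
      ∑ p ∈ univ.filter (fun p : α × α => p.1 < p.2), f p.1 p.2 -
        2 * ∑ p ∈ univ.filter (fun p : α × α => p.1 < p.2 ∧ σ p.2 < σ p.1), f p.1 p.2 := by
  have split : ∀ p : α × α, (if σ p.1 < σ p.2 then f p.1 p.2 else 0) =
      (if p.1 < p.2 then f p.1 p.2 else 0) - (if p.1 < p.2 ∧ σ p.2 < σ p.1 then f p.1 p.2 else 0)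
        + (if p.2 < p.1 ∧ σ p.1 < σ p.2 then f p.1 p.2 else 0) := by
    rintro ⟨u, v⟩
    rcases eq_or_ne u v with rfl | huv
    · simp
    rcases (hσ.ne huv).lt_or_gt with h' | h' <;> rcases huv.lt_or_gt with h | h <;>
      simp [h, lt_asymm h, h', lt_asymm h']
  have flip : ∑ p : α × α, (if p.2 < p.1 ∧ σ p.1 < σ p.2 then f p.1 p.2 else 0) =
      -∑ p : α × α, (if p.1 < p.2 ∧ σ p.2 < σ p.1 then f p.1 p.2 else 0) := by
    rw [← Equiv.sum_comp (Equiv.prodComm α α), ← sum_neg_distrib]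
    refine sum_congr rfl fun p _ => ?_
    simp only [Equiv.prodComm_apply, Prod.fst_swap, Prod.snd_swap, hf p.1 p.2]
    split_ifs <;> simp
  simp only [sum_filter, split, sum_add_distrib, sum_sub_distrib, flip]
  ring

theorem Fin.coe_cycleRange {n : ℕ} (r j : Fin n) :
    (Fin.cycleRange r j : ℕ) = if j < r then (j : ℕ) + 1 else if j = r then 0 else j := by
  rcases lt_trichotomy j r with h | rfl | h
  · simp [h, Fin.coe_cycleRange_of_lt h]
  · simp [Fin.coe_cycleRange_of_le le_rfl]
  · simp [lt_asymm h, h.ne', Fin.cycleRange_of_gt h]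

theorem coe_cyc_inv {n : ℕ} (i x : Fin n) :
    ((cyc i)⁻¹ x : ℕ) = if x < i then (x : ℕ) else if x = i then n - 1 else (x : ℕ) - 1 := by
  have h : (cyc i)⁻¹ x = (Fin.cycleRange i.rev x.rev).rev := rfl
  have := x.isLt
  simp only [h, Fin.val_rev, Fin.coe_cycleRange, Fin.rev_lt_rev, Fin.rev_inj]
  split_ifs <;> omega

theorem lt_and_cyc_inv_lt_iff {n : ℕ} {i a b : Fin n} :
    a < b ∧ (cyc i)⁻¹ b < (cyc i)⁻¹ a ↔ a = i ∧ i < b := by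
  have := b.isLt
  simp only [Fin.lt_def, Fin.ext_iff, coe_cyc_inv]
  split_ifs <;> omega

section Rows
variable {α : Type*} [Fintype α] [LinearOrder α] (M : α → α → ℝ)

def Xrow (i : α) (π : Perm α) : ℝ :=
  ∑ j ∈ univ.filter (i < ·), M (π i) (π j)

theorem sum_perm_Xrow_mul_Xrow_of_lt (hM : ∀ i j, M j i = -M i j) {i i' : α} (hii' : i < i') :
    ∑ π : Perm α, Xrow M i π * Xrow M i' π = 0 := by
  have expand : ∑ π : Perm α, Xrow M i π * Xrow M i' π =
      ∑ j ∈ univ.filter (i < ·), ∑ k ∈ univ.filter (i' < ·),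
        ∑ π : Perm α, M (π i) (π j) * M (π i') (π k) := by
    simp only [Xrow, sum_mul_sum]
    rw [sum_comm]
    exact sum_congr rfl fun j _ => sum_comm
  rw [expand, sum_comm]
  refine sum_eq_zero fun k hk => ?_
  have hi'k : i' < k := (mem_filter.mp hk).2
  have hik : i < k := hii'.trans hi'k
  rw [sum_eq_add_of_mem i' k (by simpa using hii') (by simpa using hik) hi'k.ne,
    ← sum_add_distrib]
  · exact sum_perm_antisymm_mul_add_eq_zero M hM hii'.ne hik.ne
  · intro j hj ⟨hji', hjk⟩
    exact sum_perm_antisymm_mul_eq_zero_of_disjoint M hM hii'.ne hik.ne hji' hjk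

theorem sum_perm_Xrow_mul_Xrow (hM : ∀ i j, M j i = -M i j) {i i' : α} (hii' : i ≠ i') :
    ∑ π : Perm α, Xrow M i π * Xrow M i' π = 0 := by
  rcases hii'.lt_or_gt with h | h
  · exact sum_perm_Xrow_mul_Xrow_of_lt M hM h
  · simpa only [mul_comm] using sum_perm_Xrow_mul_Xrow_of_lt M hM h

theorem sum_perm_sq_sum_Xrow (hM : ∀ i j, M j i = -M i j) :
    ∑ π : Perm α, (∑ i, Xrow M i π) ^ 2 = ∑ π : Perm α, ∑ i, Xrow M i π ^ 2 := by
  calc ∑ π : Perm α, (∑ i, Xrow M i π) ^ 2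
      = ∑ i, ∑ i', ∑ π : Perm α, Xrow M i π * Xrow M i' π := by
        simp only [sq, sum_mul_sum]
        rw [sum_comm]
        exact sum_congr rfl fun i _ => sum_comm
    _ = ∑ i, ∑ π : Perm α, Xrow M i π * Xrow M i π :=
        sum_congr rfl fun i _ =>
          sum_eq_single i (fun i' _ h => sum_perm_Xrow_mul_Xrow M hM h.symm) (by simp)
    _ = ∑ π : Perm α, ∑ i, Xrow M i π ^ 2 := by simp only [sq]; exact sum_comm

end Rows

section Xstat
variable {n : ℕ} (M : Fin n → Fin n → ℝ)

theorem Xstat_mul_s7 (hM : ∀ i j, M j i = -M i j) (π σ : Perm (Fin n)) :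
    Xstat M (π * σ) = Xstat M π -
      2 * ∑ p ∈ univ.filter (fun p : Fin n × Fin n => p.1 < p.2 ∧ σ⁻¹ p.2 < σ⁻¹ p.1),
        M (π p.1) (π p.2) := by
  have relabel : Xstat M (π * σ) =
      ∑ p ∈ univ.filter (fun p : Fin n × Fin n => σ⁻¹ p.1 < σ⁻¹ p.2), M (π p.1) (π p.2) :=
    sum_equiv (σ.prodCongr σ) (by simp [Perm.inv_def]) (by simp)
  rw [relabel, sum_filter_lt_comp (σ⁻¹).injective (fun u v => M (π u) (π v)) fun u v => hM _ _]
  rfl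

theorem Xstat_mul_cyc (hM : ∀ i j, M j i = -M i j) (π : Perm (Fin n)) (i : Fin n) :
    Xstat M (π * cyc i) = Xstat M π - 2 * Xrow M i π := by
  rw [Xstat_mul_s7 M hM]
  congr 2
  rw [filter_congr fun p _ => lt_and_cyc_inv_lt_iff]
  simp [Xrow, sum_filter, Fintype.sum_prod_type, ite_and]

theorem sum_Xrow (π : Perm (Fin n)) : ∑ i, Xrow M i π = Xstat M π := by
  rw [Xstat, sum_filter, Fintype.sum_prod_type]
  exact sum_congr rfl fun i _ => by rw [Xrow, sum_filter]

theorem sum_perm_Xstat (hM : ∀ i j, M j i = -M i j) : ∑ π : Perm (Fin n), Xstat M π = 0 := by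
  simp only [Xstat]
  rw [sum_comm]
  exact sum_eq_zero fun p _ => sum_perm_antisymm_eq_zero M hM p.1 p.2

theorem permVar_Xstat (hM : ∀ i j, M j i = -M i j) :
    permVar (Xstat M) = (∑ π : Perm (Fin n), Xstat M π ^ 2) / n.factorial := by
  simp [permVar, permExp, sum_perm_Xstat M hM]

end Xstat

theorem expect_sq_diff_general {n : ℕ} (M : Fin n → Fin n → ℝ)
    (hM : ∀ i j, M j i = - M i j) :
    (∑ π : Equiv.Perm (Fin n), ∑ i : Fin n, (Xstat M (π * cyc i) - Xstat M π) ^ 2)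
        / ((n.factorial : ℝ) * (n : ℝ))
      = (4 / (n : ℝ)) * permVar (Xstat M) := by
  have sum_sq_diff : ∑ π : Perm (Fin n), ∑ i, (Xstat M (π * cyc i) - Xstat M π) ^ 2 =
      4 * ∑ π : Perm (Fin n), Xstat M π ^ 2 := by
    simp only [Xstat_mul_cyc M hM, sub_sub_cancel_left, neg_sq, mul_pow, ← mul_sum,
      ← sum_perm_sq_sum_Xrow M hM, sum_Xrow]
    norm_num
  rw [sum_sq_diff, permVar_Xstat M hM]
  ring

/-- For an antisymmetric matrix `M` with `Var(X) > 0`, averaging over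
uniform `π ∈ S_n` and uniform `I ∈ {1,…,n}`,
`E[(X(π∘c_I) − X(π))²] = (4/n)·Var(X)`; equivalently `E(W' − W)² = 4/n`. -/
theorem expect_sq_diff {n : ℕ} (M : Fin n → Fin n → ℝ)
    (hM : ∀ i j, M j i = - M i j) (hvar : 0 < permVar (Xstat M)) :
    (∑ π : Equiv.Perm (Fin n), ∑ i : Fin n, (Xstat M (π * cyc i) - Xstat M π) ^ 2)
        / ((n.factorial : ℝ) * (n : ℝ))
      = (4 / (n : ℝ)) * permVar (Xstat M) :=
  expect_sq_diff_general M hM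
end

section
/- Let n ≥ 2 and let π be uniform on S_n and I uniform on {1,…,n}, independently. Then the pair (Des(π⁻¹), Des((π∘c_I)⁻¹)) is exchangeable: for all integers a, b, the number of pairs (π, i) ∈ S_n × {1,…,n} with Des(π⁻¹) = a and Des((π∘c_i)⁻¹) = b equals the number of pairs (π, i) with Des(π⁻¹) = b and Des((π∘c_i)⁻¹) = a. -/
namespace DPE

open Finset

/-- `t`-th value of a word, as a natural number; out-of-range = `N`. -/
def nth {k N : ℕ} (u : Fin k → Fin N) (t : ℕ) : ℕ :=
  if h : t < k then (u ⟨t, h⟩).1 else N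

lemma nth_apply {k N : ℕ} (u : Fin k → Fin N) {t : ℕ} (h : t < k) :
    nth u t = (u ⟨t, h⟩).1 := dif_pos h

lemma nth_lt {k N : ℕ} (u : Fin k → Fin N) {t : ℕ} (h : t < k) :
    nth u t < N := by rw [nth_apply u h]; exact (u ⟨t, h⟩).2

lemma nth_inj {k N : ℕ} {u : Fin k → Fin N} (hu : Function.Injective u)
    {t s : ℕ} (ht : t < k) (hs : s < k) (hne : t ≠ s) : nth u t ≠ nth u s := by
  rw [nth_apply u ht, nth_apply u hs]
  intro hc
  have := hu (Fin.ext hc)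
  rw [Fin.mk.injEq] at this
  exact hne this

/-- Number of descents of a word. -/
def dW {k N : ℕ} (u : Fin k → Fin N) : ℕ :=
  (Finset.univ.filter fun j : Fin k => j.1 + 1 < k ∧ nth u (j.1 + 1) < nth u j.1).card

variable {m : ℕ}

/-- double-ascent pattern (treating the left border as `-∞`). -/
def patA (w : Fin (m+2) → Fin (m+2)) (q : Fin (m+2)) : Prop :=
  (q.1 + 1 < m+2 ∧ nth w q.1 < nth w (q.1+1)) ∧ (q.1 = 0 ∨ nth w (q.1-1) < nth w q.1)

/-- double-descent pattern (treating the right border as `-∞`). -/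
def patB (w : Fin (m+2) → Fin (m+2)) (q : Fin (m+2)) : Prop :=
  (1 ≤ q.1 ∧ nth w q.1 < nth w (q.1-1)) ∧ (q.1 = m+1 ∨ (q.1+1 < m+2 ∧ nth w (q.1+1) < nth w q.1))

instance {w : Fin (m+2) → Fin (m+2)} {q : Fin (m+2)} : Decidable (patA w q) := by
  unfold patA; infer_instance

instance {w : Fin (m+2) → Fin (m+2)} {q : Fin (m+2)} : Decidable (patB w q) := by
  unfold patB; infer_instance

lemma patA_patB_excl {w : Fin (m+2) → Fin (m+2)} {q : Fin (m+2)}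
    (hA : patA w q) (hB : patB w q) : False := by
  obtain ⟨⟨hb, h1⟩, _⟩ := hA
  obtain ⟨_, h2⟩ := hB
  rcases h2 with h2 | ⟨_, h2⟩ <;> omega

lemma descents_eq_dW (π : Equiv.Perm (Fin (m+2))) : descents π = dW ⇑π := by
  unfold descents dW
  apply Finset.card_nbij' (fun j => ⟨j.1, by have := j.2; omega⟩)
    (fun j : Fin (m+2) => ⟨min j.1 m, by omega⟩)
  · intro a ha
    simp only [Finset.mem_coe, mem_filter, mem_univ, true_and] at ha ⊢
    have h2 : a.1 + 1 < m + 2 := by have := a.2; omega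
    refine ⟨h2, ?_⟩
    rw [nth_apply _ h2, nth_apply _ (by omega : a.1 < m+2)]
    exact ha
  · intro a ha
    simp only [Finset.mem_coe, mem_filter, mem_univ, true_and] at ha ⊢
    obtain ⟨h2, hlt⟩ := ha
    have hm : min a.1 m = a.1 := by omega
    rw [nth_apply _ h2, nth_apply _ (by omega : a.1 < m+2)] at hlt
    simp only [hm]
    exact hlt
  · intro a ha
    simp only [Finset.mem_coe, mem_filter, mem_univ, true_and] at ha
    apply Fin.ext
    show min a.1 m = a.1
    have := a.2; omega
  · intro a ha
    simp only [Finset.mem_coe, mem_filter, mem_univ, true_and] at ha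
    apply Fin.ext
    show min a.1 m = a.1
    omega

lemma dW_le {k N : ℕ} (u : Fin (k+1) → Fin N) : dW u ≤ k := by
  unfold dW
  have : (Finset.univ.filter fun j : Fin (k+1) => j.1 + 1 < k+1 ∧ nth u (j.1 + 1) < nth u j.1)
      ⊆ Finset.univ.erase ⟨k, by omega⟩ := by
    intro j hj
    simp only [mem_filter, mem_univ, true_and] at hj
    apply Finset.mem_erase.2
    refine ⟨?_, mem_univ _⟩
    intro hc
    rw [hc] at hj
    simp at hj
  calc _ ≤ (Finset.univ.erase (⟨k, by omega⟩ : Fin (k+1))).card := Finset.card_le_card this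
    _ = k := by rw [Finset.card_erase_of_mem (mem_univ _)]; simp

lemma descents_le (π : Equiv.Perm (Fin (m+2))) : descents π ≤ m + 1 := by
  rw [descents_eq_dW]; exact dW_le _


lemma cycInv_apply (i v : Fin (m+2)) :
    ((cyc i)⁻¹ : Equiv.Perm (Fin (m+2))) v = (Fin.cycleRange i.rev (v.rev)).rev := by
  have h : (cyc i)⁻¹ = Fin.revPerm.trans ((Fin.cycleRange i.rev).trans Fin.revPerm) := by
    rw [cyc, Equiv.Perm.inv_def, Equiv.symm_symm]
  rw [h]
  rfl

lemma cycInv_apply_val (i v : Fin (m+2)) :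
    (((cyc i)⁻¹ : Equiv.Perm (Fin (m+2))) v).1
      = if v = i then m+1 else if i.1 < v.1 then v.1 - 1 else v.1 := by
  rw [cycInv_apply]
  rcases eq_or_ne v i with rfl | hne
  · rw [if_pos rfl, Fin.cycleRange_self, Fin.val_rev]
    simp
  · rw [if_neg hne]
    rcases lt_or_gt_of_ne (fun hc : v.1 = i.1 => hne (Fin.ext hc)) with hlt | hgt
    · rw [if_neg (by omega)]
      have : i.rev < v.rev := Fin.rev_lt_rev.2 (by exact hlt)
      rw [Fin.cycleRange_of_gt this, Fin.rev_rev]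
    · rw [if_pos hgt]
      have hvi : v.rev < i.rev := Fin.rev_lt_rev.2 (by exact hgt)
      rw [Fin.cycleRange_of_lt hvi]
      have hvr : (v.rev).1 = m + 1 - v.1 := by rw [Fin.val_rev]; omega
      have hlast : v.rev < Fin.last (m+1) := lt_of_lt_of_le hvi (Fin.le_last _)
      have hadd : (v.rev + 1).1 = (v.rev).1 + 1 := Fin.val_add_one_of_lt hlast
      rw [Fin.val_rev, hadd, hvr]
      have := v.2
      have := i.2
      omega

lemma cycInv_lt_iff {i v w : Fin (m+2)} (hv : v ≠ i) (hw : w ≠ i) :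
    ((cyc i)⁻¹ : Equiv.Perm (Fin (m+2))) v < ((cyc i)⁻¹ : Equiv.Perm (Fin (m+2))) w ↔ v < w := by
  rw [Fin.lt_def, Fin.lt_def, cycInv_apply_val, cycInv_apply_val, if_neg hv, if_neg hw]
  have h1 : v.1 ≠ i.1 := fun hc => hv (Fin.ext hc)
  have h2 : w.1 ≠ i.1 := fun hc => hw (Fin.ext hc)
  split_ifs <;> omega

lemma cycInv_lt_top {i v : Fin (m+2)} (hv : v ≠ i) :
    ((cyc i)⁻¹ : Equiv.Perm (Fin (m+2))) v < ((cyc i)⁻¹ : Equiv.Perm (Fin (m+2))) i := by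
  rw [Fin.lt_def, cycInv_apply_val, cycInv_apply_val, if_neg hv, if_pos rfl]
  have h1 : v.1 ≠ i.1 := fun hc => hv (Fin.ext hc)
  have := v.2
  have := i.2
  split_ifs <;> omega

lemma dW_rev {k N : ℕ} (u : Fin (k+1) → Fin N) (hu : Function.Injective u) :
    dW (u ∘ Fin.rev) + dW u = k := by
  classical
  unfold dW
  have hrevval : ∀ (t : ℕ) (h : t < k+1), ((Fin.rev (⟨t, h⟩ : Fin (k+1))).1) = k - t := by
    intro t h
    rw [Fin.val_rev]
    show k + 1 - (t + 1) = k - t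
    omega
  have hnthrev : ∀ (t : ℕ), t < k+1 → nth (u ∘ Fin.rev) t = nth u (k - t) := by
    intro t h
    rw [nth_apply _ h, nth_apply _ (by omega : k - t < k+1)]
    show (u (Fin.rev ⟨t, h⟩)).1 = _
    have : Fin.rev (⟨t, h⟩ : Fin (k+1)) = ⟨k - t, by omega⟩ := Fin.ext (hrevval t h)
    rw [this]
  -- descents of reversed word = ascents of u at mirrored positions
  have key : (Finset.univ.filter fun j : Fin (k+1) =>
        j.1 + 1 < k+1 ∧ nth (u ∘ Fin.rev) (j.1 + 1) < nth (u ∘ Fin.rev) j.1).card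
      = (Finset.univ.filter fun j : Fin (k+1) =>
        j.1 + 1 < k+1 ∧ ¬ (nth u (j.1 + 1) < nth u j.1)).card := by
    apply Finset.card_nbij' (fun j : Fin (k+1) => ⟨k - 1 - j.1, by omega⟩)
      (fun j : Fin (k+1) => ⟨k - 1 - j.1, by omega⟩)
    · intro a ha
      simp only [Finset.mem_coe, mem_filter, mem_univ, true_and] at ha ⊢
      obtain ⟨hb, hlt⟩ := ha
      rw [hnthrev _ hb, hnthrev _ (by omega)] at hlt
      have e1 : k - (a.1+1) = k - 1 - a.1 := by omega
      rw [e1] at hlt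
      refine ⟨by omega, ?_⟩
      have e2 : k - 1 - a.1 + 1 = k - a.1 := by omega
      rw [e2]
      omega
    · intro a ha
      simp only [Finset.mem_coe, mem_filter, mem_univ, true_and] at ha ⊢
      obtain ⟨hb, hnlt⟩ := ha
      refine ⟨by omega, ?_⟩
      rw [hnthrev _ (by omega), hnthrev _ (by omega)]
      have e1 : k - (k - 1 - a.1 + 1) = a.1 := by omega
      have e2 : k - (k - 1 - a.1) = a.1 + 1 := by omega
      rw [e1, e2]
      have hne := nth_inj hu (t := a.1 + 1) (s := a.1) hb (by omega) (by omega)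
      omega
    · intro a ha
      simp only [Finset.mem_coe, mem_filter, mem_univ, true_and] at ha
      apply Fin.ext
      show k - 1 - (k - 1 - a.1) = a.1
      omega
    · intro a ha
      simp only [Finset.mem_coe, mem_filter, mem_univ, true_and] at ha
      apply Fin.ext
      show k - 1 - (k - 1 - a.1) = a.1
      omega
  rw [key]
  have h1 : ∀ (p : Fin (k+1) → Prop) (_ : DecidablePred p), (Finset.univ.filter fun j : Fin (k+1) => j.1+1 < k+1 ∧ p j) = (Finset.univ.filter (fun j : Fin (k+1) => j.1+1 < k+1)).filter p := by
    intro p hp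
    rw [Finset.filter_filter]
  rw [h1 _ (fun j => instDecidableNot), h1 _ (fun j => Nat.decLt _ _)]
  have h2 := Finset.card_filter_add_card_filter_not
    (s := Finset.univ.filter (fun j : Fin (k+1) => j.1+1 < k+1))
    (p := fun j : Fin (k+1) => nth u (j.1+1) < nth u j.1)
  have h3 : (Finset.univ.filter (fun j : Fin (k+1) => j.1+1 < k+1)).card = k := by
    have he : (Finset.univ.filter (fun j : Fin (k+1) => j.1+1 < k+1))
        = Finset.univ.erase ⟨k, by omega⟩ := by
      rw [← Finset.filter_ne']
      apply Finset.filter_congr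
      intro j _
      constructor
      · intro h hc
        rw [hc] at h
        simp at h
      · intro h
        have : j.1 ≠ k := fun hc => h (Fin.ext hc)
        have := j.2
        omega
    rw [he, Finset.card_erase_of_mem (Finset.mem_univ _)]
    simp
  omega


lemma card_filter_eq_single {α : Type*} [Fintype α] [DecidableEq α]
    (P : α → Prop) [DecidablePred P] (z : α) :
    (Finset.univ.filter fun j => P j ∧ j = z).card = if P z then 1 else 0 := by
  by_cases h : P z
  · rw [if_pos h]
    have : (Finset.univ.filter fun j => P j ∧ j = z) = {z} := by
      ext j
      simp only [mem_filter, mem_univ, true_and, Finset.mem_singleton]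
      constructor
      · exact fun hh => hh.2
      · rintro rfl; exact ⟨h, rfl⟩
    rw [this, Finset.card_singleton]
  · rw [if_neg h]
    have : (Finset.univ.filter fun j => P j ∧ j = z) = ∅ := by
      ext j
      simp only [mem_filter, mem_univ, true_and, Finset.notMem_empty, iff_false]
      rintro ⟨hj, rfl⟩
      exact h hj
    rw [this, Finset.card_empty]

lemma card_filter_eq_pair {α : Type*} [Fintype α] [DecidableEq α]
    (P : α → Prop) [DecidablePred P] {z₁ z₂ : α} (hz : z₁ ≠ z₂) :
    (Finset.univ.filter fun j => P j ∧ (j = z₁ ∨ j = z₂)).card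
      = (if P z₁ then 1 else 0) + (if P z₂ then 1 else 0) := by
  have hun : (Finset.univ.filter fun j => P j ∧ (j = z₁ ∨ j = z₂))
      = (Finset.univ.filter fun j => P j ∧ j = z₁) ∪ (Finset.univ.filter fun j => P j ∧ j = z₂) := by
    ext j
    simp only [mem_filter, mem_univ, true_and, Finset.mem_union]
    tauto
  have hdis : Disjoint (Finset.univ.filter fun j => P j ∧ j = z₁)
      (Finset.univ.filter fun j => P j ∧ j = z₂) := by
    rw [Finset.disjoint_left]
    intro j hj1 hj2
    simp only [mem_filter, mem_univ, true_and] at hj1 hj2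
    exact hz (hj1.2 ▸ hj2.2 ▸ rfl)
  rw [hun, Finset.card_union_of_disjoint hdis, card_filter_eq_single, card_filter_eq_single]

lemma L1 (τ : Equiv.Perm (Fin (m+2))) (i : Fin (m+2)) :
    descents ((cyc i)⁻¹ * τ) + (if patB ⇑τ (τ⁻¹ i) then 1 else 0)
      = descents τ + (if patA ⇑τ (τ⁻¹ i) then 1 else 0) := by
  classical
  set σ' : Equiv.Perm (Fin (m+2)) := (cyc i)⁻¹ * τ with hσdef
  set q : Fin (m+2) := τ⁻¹ i with hqdef
  have hτq : τ q = i := by rw [hqdef]; exact Equiv.apply_symm_apply τ i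
  have hτne : ∀ (t : ℕ) (h : t < m+2), t ≠ q.1 → τ ⟨t, h⟩ ≠ i := by
    intro t h hne hc
    apply hne
    have : (⟨t, h⟩ : Fin (m+2)) = q := τ.injective (by rw [hτq, hc])
    exact congrArg Fin.val this
  have hq2 := q.2
  have hnthσ : ∀ (t : ℕ) (h : t < m+2), nth ⇑σ' t = (((cyc i)⁻¹ : Equiv.Perm (Fin (m+2))) (τ ⟨t, h⟩)).1 := by
    intro t h
    rw [nth_apply _ h, hσdef]
    simp [Equiv.Perm.mul_apply]
  have hnthτ : ∀ (t : ℕ) (h : t < m+2), nth ⇑τ t = (τ ⟨t, h⟩).1 := fun t h => nth_apply _ h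
  have hcmp : ∀ (t s : ℕ) (ht : t < m+2) (hs : s < m+2), t ≠ q.1 → s ≠ q.1 →
      (nth ⇑σ' t < nth ⇑σ' s ↔ nth ⇑τ t < nth ⇑τ s) := by
    intro t s ht hs hnt hns
    rw [hnthσ t ht, hnthσ s hs, hnthτ t ht, hnthτ s hs]
    rw [show ((((cyc i)⁻¹ : Equiv.Perm (Fin (m+2))) (τ ⟨t, ht⟩)).1 < (((cyc i)⁻¹ : Equiv.Perm (Fin (m+2))) (τ ⟨s, hs⟩)).1) ↔ _ from (Fin.lt_def).symm]
    rw [show ((τ ⟨t, ht⟩).1 < (τ ⟨s, hs⟩).1) ↔ _ from (Fin.lt_def).symm]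
    exact cycInv_lt_iff (hτne t ht hnt) (hτne s hs hns)
  have hcmpTop : ∀ (t : ℕ) (ht : t < m+2), t ≠ q.1 → nth ⇑σ' t < nth ⇑σ' q.1 := by
    intro t ht hnt
    rw [hnthσ t ht, hnthσ q.1 (by omega)]
    have : (⟨q.1, by omega⟩ : Fin (m+2)) = q := Fin.ext rfl
    rw [this, hτq]
    rw [show ((((cyc i)⁻¹ : Equiv.Perm (Fin (m+2))) (τ ⟨t, ht⟩)).1 < (((cyc i)⁻¹ : Equiv.Perm (Fin (m+2))) i).1) ↔ _ from (Fin.lt_def).symm]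
    exact cycInv_lt_top (hτne t ht hnt)
  -- split descents into special (near q) and generic parts
  have hsplit : ∀ (f : Equiv.Perm (Fin (m+2))),
      descents f = (Finset.univ.filter fun j : Fin (m+2) =>
          (j.1 + 1 < m+2 ∧ nth ⇑f (j.1+1) < nth ⇑f j.1) ∧ (j.1 = q.1 ∨ j.1 + 1 = q.1)).card
        + (Finset.univ.filter fun j : Fin (m+2) =>
          (j.1 + 1 < m+2 ∧ nth ⇑f (j.1+1) < nth ⇑f j.1) ∧ ¬ (j.1 = q.1 ∨ j.1 + 1 = q.1)).card := by
    intro f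
    rw [descents_eq_dW]
    unfold dW
    have hh := Finset.card_filter_add_card_filter_not
      (s := Finset.univ.filter fun j : Fin (m+2) => j.1 + 1 < m+2 ∧ nth ⇑f (j.1+1) < nth ⇑f j.1)
      (p := fun j : Fin (m+2) => j.1 = q.1 ∨ j.1 + 1 = q.1)
    rw [Finset.filter_filter, Finset.filter_filter] at hh
    exact hh.symm
  have hrest : (Finset.univ.filter fun j : Fin (m+2) =>
          (j.1 + 1 < m+2 ∧ nth ⇑σ' (j.1+1) < nth ⇑σ' j.1) ∧ ¬ (j.1 = q.1 ∨ j.1 + 1 = q.1))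
      = (Finset.univ.filter fun j : Fin (m+2) =>
          (j.1 + 1 < m+2 ∧ nth ⇑τ (j.1+1) < nth ⇑τ j.1) ∧ ¬ (j.1 = q.1 ∨ j.1 + 1 = q.1)) := by
    apply Finset.filter_congr
    intro j _
    constructor
    · rintro ⟨⟨hb, hlt⟩, hs⟩
      push_neg at hs
      exact ⟨⟨hb, (hcmp _ _ hb (by omega) hs.2 hs.1).1 hlt⟩, by push_neg; exact hs⟩
    · rintro ⟨⟨hb, hlt⟩, hs⟩
      push_neg at hs
      exact ⟨⟨hb, (hcmp _ _ hb (by omega) hs.2 hs.1).2 hlt⟩, by push_neg; exact hs⟩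
  rw [hsplit σ', hsplit τ, hrest]
  have hgoal : ∀ (Aσ Aτ R iB iA : ℕ), Aσ + iB = Aτ + iA → Aσ + R + iB = Aτ + R + iA := by
    intro _ _ _ _ _ h; omega
  apply hgoal
  clear hgoal hrest hsplit
  -- case analysis on the position q
  rcases (by omega : q.1 = 0 ∨ q.1 = m+1 ∨ (1 ≤ q.1 ∧ q.1 ≤ m)) with h0 | hm1 | hmid
  · -- q at the left end
    have hSp : ∀ j : Fin (m+2), (j.1 = q.1 ∨ j.1 + 1 = q.1) ↔ j = q := by
      intro j
      constructor
      · rintro (hj | hj)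
        · exact Fin.ext hj
        · exact absurd hj (by omega)
      · rintro rfl; exact Or.inl rfl
    rw [Finset.filter_congr (fun j _ => by rw [hSp j] :
      ∀ j ∈ Finset.univ, (((j.1 + 1 < m+2 ∧ nth ⇑σ' (j.1+1) < nth ⇑σ' j.1) ∧ (j.1 = q.1 ∨ j.1 + 1 = q.1))
        ↔ ((j.1 + 1 < m+2 ∧ nth ⇑σ' (j.1+1) < nth ⇑σ' j.1) ∧ j = q)))]
    rw [Finset.filter_congr (fun j _ => by rw [hSp j] :
      ∀ j ∈ Finset.univ, (((j.1 + 1 < m+2 ∧ nth ⇑τ (j.1+1) < nth ⇑τ j.1) ∧ (j.1 = q.1 ∨ j.1 + 1 = q.1))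
        ↔ ((j.1 + 1 < m+2 ∧ nth ⇑τ (j.1+1) < nth ⇑τ j.1) ∧ j = q)))]
    rw [card_filter_eq_single, card_filter_eq_single]
    have hPσ : q.1 + 1 < m+2 ∧ nth ⇑σ' (q.1+1) < nth ⇑σ' q.1 :=
      ⟨by omega, hcmpTop (q.1+1) (by omega) (by omega)⟩
    rw [if_pos hPσ]
    have hBf : ¬ patB ⇑τ q := by
      rintro ⟨⟨h1, _⟩, _⟩; omega
    rw [if_neg hBf]
    have hA : patA ⇑τ q ↔ nth ⇑τ q.1 < nth ⇑τ (q.1+1) := by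
      unfold patA
      constructor
      · rintro ⟨⟨_, h⟩, _⟩; exact h
      · intro h; exact ⟨⟨by omega, h⟩, Or.inl h0⟩
    have hne : nth ⇑τ (q.1+1) ≠ nth ⇑τ q.1 :=
      nth_inj τ.injective (by omega) (by omega) (by omega)
    by_cases hc : nth ⇑τ (q.1+1) < nth ⇑τ q.1
    · rw [if_pos ⟨by omega, hc⟩, if_neg (by rw [hA]; omega)]
    · rw [if_neg (fun hh => hc hh.2), if_pos (hA.2 (by omega))]
  · -- q at the right end
    have hSp : ∀ j : Fin (m+2), (j.1 = q.1 ∨ j.1 + 1 = q.1) ↔ (j = q ∨ j = ⟨m, by omega⟩) := by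
      intro j
      constructor
      · rintro (hj | hj)
        · exact Or.inl (Fin.ext hj)
        · refine Or.inr (Fin.ext ?_)
          show j.1 = m
          omega
      · rintro (rfl | rfl)
        · exact Or.inl rfl
        · right
          show m + 1 = q.1
          omega
    rw [Finset.filter_congr (fun j _ => by rw [hSp j] :
      ∀ j ∈ Finset.univ, (((j.1 + 1 < m+2 ∧ nth ⇑σ' (j.1+1) < nth ⇑σ' j.1) ∧ (j.1 = q.1 ∨ j.1 + 1 = q.1))
        ↔ ((j.1 + 1 < m+2 ∧ nth ⇑σ' (j.1+1) < nth ⇑σ' j.1) ∧ (j = q ∨ j = ⟨m, by omega⟩))))]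
    rw [Finset.filter_congr (fun j _ => by rw [hSp j] :
      ∀ j ∈ Finset.univ, (((j.1 + 1 < m+2 ∧ nth ⇑τ (j.1+1) < nth ⇑τ j.1) ∧ (j.1 = q.1 ∨ j.1 + 1 = q.1))
        ↔ ((j.1 + 1 < m+2 ∧ nth ⇑τ (j.1+1) < nth ⇑τ j.1) ∧ (j = q ∨ j = ⟨m, by omega⟩))))]
    have hzne : q ≠ (⟨m, by omega⟩ : Fin (m+2)) := by
      intro hc
      have h2 : q.1 = m := congrArg Fin.val hc
      omega
    rw [card_filter_eq_pair _ hzne, card_filter_eq_pair _ hzne]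
    have hb1 : ¬ (q.1 + 1 < m + 2) := by omega
    rw [if_neg (fun hh : q.1 + 1 < m+2 ∧ _ => hb1 hh.1), if_neg (fun hh : q.1 + 1 < m+2 ∧ _ => hb1 hh.1)]
    have hz2σ : ((⟨m, by omega⟩ : Fin (m+2)).1 + 1 < m+2 ∧ nth ⇑σ' ((⟨m, by omega⟩ : Fin (m+2)).1+1) < nth ⇑σ' (⟨m, by omega⟩ : Fin (m+2)).1) ↔ False := by
      simp only [iff_false]
      rintro ⟨_, hlt⟩
      have h3 : nth ⇑σ' (m+1) < nth ⇑σ' m := hlt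
      have h4 : nth ⇑σ' m < nth ⇑σ' q.1 := hcmpTop m (by omega) (by omega)
      rw [hm1] at h4
      omega
    rw [if_neg (hz2σ.1)]
    have hArw : ¬ patA ⇑τ q := by
      rintro ⟨⟨hb, _⟩, _⟩; omega
    rw [if_neg hArw]
    have hz2τ : ((⟨m, by omega⟩ : Fin (m+2)).1 + 1 < m+2 ∧ nth ⇑τ ((⟨m, by omega⟩ : Fin (m+2)).1+1) < nth ⇑τ (⟨m, by omega⟩ : Fin (m+2)).1) ↔ nth ⇑τ (m+1) < nth ⇑τ m := by
      constructor
      · exact fun hh => hh.2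
      · exact fun hh => ⟨show m + 1 + 1 ≤ m + 2 by omega, hh⟩
    have hBrw : patB ⇑τ q ↔ nth ⇑τ (m+1) < nth ⇑τ m := by
      unfold patB
      rw [hm1]
      constructor
      · rintro ⟨⟨_, hh⟩, _⟩
        simpa using hh
      · intro hh
        exact ⟨⟨by omega, by simpa using hh⟩, Or.inl rfl⟩
    by_cases hc : nth ⇑τ (m+1) < nth ⇑τ m
    · rw [if_pos (hz2τ.2 hc), if_pos (hBrw.2 hc)]
    · rw [if_neg (fun hh => hc (hz2τ.1 hh)), if_neg (fun hh => hc (hBrw.1 hh))]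
  · -- q in the middle
    have hSp : ∀ j : Fin (m+2), (j.1 = q.1 ∨ j.1 + 1 = q.1) ↔ (j = q ∨ j = ⟨q.1 - 1, by omega⟩) := by
      intro j
      constructor
      · rintro (hj | hj)
        · exact Or.inl (Fin.ext hj)
        · refine Or.inr (Fin.ext ?_)
          show j.1 = q.1 - 1
          omega
      · rintro (rfl | rfl)
        · left; rfl
        · right
          show q.1 - 1 + 1 = q.1
          omega
    rw [Finset.filter_congr (fun j _ => by rw [hSp j] :
      ∀ j ∈ Finset.univ, (((j.1 + 1 < m+2 ∧ nth ⇑σ' (j.1+1) < nth ⇑σ' j.1) ∧ (j.1 = q.1 ∨ j.1 + 1 = q.1))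
        ↔ ((j.1 + 1 < m+2 ∧ nth ⇑σ' (j.1+1) < nth ⇑σ' j.1) ∧ (j = q ∨ j = ⟨q.1 - 1, by omega⟩))))]
    rw [Finset.filter_congr (fun j _ => by rw [hSp j] :
      ∀ j ∈ Finset.univ, (((j.1 + 1 < m+2 ∧ nth ⇑τ (j.1+1) < nth ⇑τ j.1) ∧ (j.1 = q.1 ∨ j.1 + 1 = q.1))
        ↔ ((j.1 + 1 < m+2 ∧ nth ⇑τ (j.1+1) < nth ⇑τ j.1) ∧ (j = q ∨ j = ⟨q.1 - 1, by omega⟩))))]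
    have hzne : q ≠ (⟨q.1 - 1, by omega⟩ : Fin (m+2)) := by
      intro hc
      have h2 : q.1 = q.1 - 1 := congrArg Fin.val hc
      omega
    rw [card_filter_eq_pair _ hzne, card_filter_eq_pair _ hzne]
    -- evaluate the four special indicators
    have hPσq : q.1 + 1 < m+2 ∧ nth ⇑σ' (q.1+1) < nth ⇑σ' q.1 :=
      ⟨by omega, hcmpTop (q.1+1) (by omega) (by omega)⟩
    rw [if_pos hPσq]
    have hPσz2 : ¬ ((⟨q.1 - 1, by omega⟩ : Fin (m+2)).1 + 1 < m+2
        ∧ nth ⇑σ' ((⟨q.1 - 1, by omega⟩ : Fin (m+2)).1+1) < nth ⇑σ' (⟨q.1 - 1, by omega⟩ : Fin (m+2)).1) := by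
      rintro ⟨_, hlt⟩
      have he : q.1 - 1 + 1 = q.1 := by omega
      have h2 : nth ⇑σ' (q.1 - 1) < nth ⇑σ' q.1 := hcmpTop (q.1-1) (by omega) (by omega)
      have : nth ⇑σ' (q.1 - 1 + 1) < nth ⇑σ' (q.1 - 1) := hlt
      rw [he] at this
      omega
    rw [if_neg hPσz2]
    set c₀ := nth ⇑τ q.1 with hc₀
    set ap := nth ⇑τ (q.1+1) with hap
    set am := nth ⇑τ (q.1-1) with ham
    have hPτq : (q.1 + 1 < m+2 ∧ nth ⇑τ (q.1+1) < nth ⇑τ q.1) ↔ ap < c₀ := by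
      constructor
      · exact fun hh => hh.2
      · exact fun hh => ⟨by omega, hh⟩
    have hPτz2 : ((⟨q.1 - 1, by omega⟩ : Fin (m+2)).1 + 1 < m+2
        ∧ nth ⇑τ ((⟨q.1 - 1, by omega⟩ : Fin (m+2)).1+1) < nth ⇑τ (⟨q.1 - 1, by omega⟩ : Fin (m+2)).1) ↔ c₀ < am := by
      have he : q.1 - 1 + 1 = q.1 := by omega
      constructor
      · rintro ⟨_, hh⟩
        have : nth ⇑τ (q.1 - 1 + 1) < nth ⇑τ (q.1 - 1) := hh
        rw [he] at this
        exact this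
      · intro hh
        refine ⟨show q.1 - 1 + 1 < m + 2 by omega, ?_⟩
        show nth ⇑τ (q.1 - 1 + 1) < nth ⇑τ (q.1 - 1)
        rw [he]
        exact hh
    have hArw : patA ⇑τ q ↔ (c₀ < ap ∧ am < c₀) := by
      unfold patA
      constructor
      · rintro ⟨⟨_, h1⟩, h2⟩
        rcases h2 with h2 | h2
        · omega
        · exact ⟨h1, h2⟩
      · rintro ⟨h1, h2⟩
        exact ⟨⟨by omega, h1⟩, Or.inr h2⟩
    have hBrw : patB ⇑τ q ↔ (c₀ < am ∧ ap < c₀) := by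
      unfold patB
      constructor
      · rintro ⟨⟨_, h1⟩, h2⟩
        rcases h2 with h2 | ⟨_, h2⟩
        · omega
        · exact ⟨h1, h2⟩
      · rintro ⟨h1, h2⟩
        exact ⟨⟨by omega, h1⟩, Or.inr ⟨by omega, h2⟩⟩
    have hne1 : ap ≠ c₀ := nth_inj τ.injective (by omega) (by omega) (by omega)
    have hne2 : am ≠ c₀ := nth_inj τ.injective (by omega) (by omega) (by omega)
    by_cases hc1 : ap < c₀ <;> by_cases hc2 : c₀ < am <;>
      · rw [if_congr hPτq rfl rfl, if_congr hPτz2 rfl rfl,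
          if_congr hArw rfl rfl, if_congr hBrw rfl rfl]
        split_ifs <;> omega


-- application lemmas for insertNth, in terms of nth
lemma nth_insertNth_lt (g : Fin (m+2)) (x : Fin (m+2)) (u : Fin (m+1) → Fin (m+2))
    {t : ℕ} (ht : t < g.1) : nth (Fin.insertNth g x u) t = nth u t := by
  have hg := g.2
  have ht2 : t < m + 2 := by omega
  have ht1 : t < m + 1 := by omega
  rw [nth_apply _ ht2, nth_apply _ ht1]
  have hsa : g.succAbove ⟨t, ht1⟩ = ⟨t, ht2⟩ := by
    rw [Fin.succAbove_of_castSucc_lt]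
    · rfl
    · rw [Fin.lt_def]
      exact ht
  rw [← hsa, Fin.insertNth_apply_succAbove]

lemma nth_insertNth_gt (g : Fin (m+2)) (x : Fin (m+2)) (u : Fin (m+1) → Fin (m+2))
    {t : ℕ} (ht : g.1 < t) (ht2 : t < m + 2) :
    nth (Fin.insertNth g x u) t = nth u (t - 1) := by
  have ht1 : t - 1 < m + 1 := by omega
  rw [nth_apply _ ht2, nth_apply _ ht1]
  have hsa : g.succAbove ⟨t - 1, ht1⟩ = ⟨t, ht2⟩ := by
    rw [Fin.succAbove_of_le_castSucc]
    · apply Fin.ext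
      show t - 1 + 1 = t
      omega
    · rw [Fin.le_def]
      show g.1 ≤ t - 1
      omega
  rw [← hsa, Fin.insertNth_apply_succAbove]

lemma nth_insertNth_self (g : Fin (m+2)) (x : Fin (m+2)) (u : Fin (m+1) → Fin (m+2)) :
    nth (Fin.insertNth g x u) g.1 = x.1 := by
  rw [nth_apply _ g.2]
  have : (⟨g.1, g.2⟩ : Fin (m+2)) = g := Fin.ext rfl
  rw [this, Fin.insertNth_apply_same]

def gapSet (u : Fin (m+1) → Fin (m+2)) (x : Fin (m+2)) : Finset (Fin (m+2)) :=
  Finset.univ.filter fun g => patA (Fin.insertNth g x u) g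

lemma mem_gapSet_iff {u : Fin (m+1) → Fin (m+2)} {x : Fin (m+2)} {g : Fin (m+2)} :
    g ∈ gapSet u x ↔
      g.1 < m + 1 ∧ x.1 < nth u g.1 ∧ (g.1 = 0 ∨ nth u (g.1 - 1) < x.1) := by
  unfold gapSet
  rw [Finset.mem_filter]
  simp only [Finset.mem_univ, true_and]
  unfold patA
  constructor
  · rintro ⟨⟨hb, h1⟩, h2⟩
    rw [nth_insertNth_self] at h1
    rw [nth_insertNth_gt g x u (by omega) (by omega)] at h1
    have e : g.1 + 1 - 1 = g.1 := by omega
    rw [e] at h1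
    refine ⟨by omega, h1, ?_⟩
    rcases Nat.eq_zero_or_pos g.1 with hg0 | hg0
    · exact Or.inl hg0
    · rcases h2 with h2 | h2
      · exact Or.inl h2
      · right
        rw [nth_insertNth_self] at h2
        rw [nth_insertNth_lt g x u (by omega : g.1 - 1 < g.1)] at h2
        exact h2
  · rintro ⟨hb, h1, h2⟩
    constructor
    · refine ⟨by omega, ?_⟩
      rw [nth_insertNth_self, nth_insertNth_gt g x u (by omega) (by omega)]
      have e : g.1 + 1 - 1 = g.1 := by omega
      rw [e]
      exact h1
    · rcases h2 with h2 | h2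
      · exact Or.inl h2
      · rcases Nat.eq_zero_or_pos g.1 with hg0 | hg0
        · exact Or.inl hg0
        · right
          rw [nth_insertNth_self, nth_insertNth_lt g x u (by omega : g.1 - 1 < g.1)]
          exact h2


lemma dW_insertNth {u : Fin (m+1) → Fin (m+2)} {x : Fin (m+2)} {g : Fin (m+2)}
    (hg : g ∈ gapSet u x) : dW (Fin.insertNth g x u) = dW u := by
  rw [mem_gapSet_iff] at hg
  obtain ⟨hb, h1, h2⟩ := hg
  have f1 : nth (Fin.insertNth g x u) g.1 = x.1 := nth_insertNth_self g x u
  have f2 : nth (Fin.insertNth g x u) (g.1+1) = nth u g.1 := by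
    have hh := nth_insertNth_gt g x u (t := g.1+1) (by omega) (by omega)
    rwa [show g.1 + 1 - 1 = g.1 from by omega] at hh
  have f3 : ∀ t : ℕ, t < g.1 → nth (Fin.insertNth g x u) t = nth u t :=
    fun t ht => nth_insertNth_lt g x u ht
  have f4 : ∀ t : ℕ, g.1 < t → t < m+2 → nth (Fin.insertNth g x u) t = nth u (t-1) :=
    fun t ht ht2 => nth_insertNth_gt g x u ht ht2
  unfold dW
  have hex : ∀ j : Fin (m+2), (j.1 + 1 < m+2 ∧ nth (Fin.insertNth g x u) (j.1+1) < nth (Fin.insertNth g x u) j.1)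
      → j.1 ≠ g.1 ∧ j.1 + 1 ≠ g.1 := by
    rintro j ⟨hjb, hjd⟩
    constructor
    · intro hc
      rw [hc, f1, f2] at hjd
      omega
    · intro hc
      have hg1 : 1 ≤ g.1 := by omega
      have e : j.1 = g.1 - 1 := by omega
      rw [hc, f1, e, f3 _ (by omega)] at hjd
      rcases h2 with h2 | h2
      · omega
      · omega
  have hexu : ∀ k : Fin (m+1), (k.1 + 1 < m+1 ∧ nth u (k.1+1) < nth u k.1) → k.1 + 1 ≠ g.1 := by
    rintro k ⟨hkb, hkd⟩ hc
    have hg1 : 1 ≤ g.1 := by omega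
    rcases h2 with h2 | h2
    · omega
    · rw [hc] at hkd
      have : k.1 = g.1 - 1 := by omega
      rw [this] at hkd
      omega
  apply Finset.card_nbij' (fun j : Fin (m+2) => (⟨if j.1 < g.1 then j.1 else j.1 - 1, by have := j.2; have := g.2; split_ifs <;> omega⟩ : Fin (m+1)))
    (fun k : Fin (m+1) => (⟨if k.1 < g.1 then k.1 else k.1 + 1, by have := k.2; split_ifs <;> omega⟩ : Fin (m+2)))
  · intro j hj
    simp only [Finset.mem_coe, Finset.mem_filter, Finset.mem_univ, true_and] at hj ⊢
    obtain ⟨hjne, hjne2⟩ := hex j hj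
    obtain ⟨hjb, hjd⟩ := hj
    by_cases hlt : j.1 < g.1
    · rw [if_pos hlt]
      have hjlt : j.1 + 1 < g.1 := by omega
      show j.1 + 1 < m+1 ∧ nth u (j.1+1) < nth u j.1
      rw [← f3 _ hjlt, ← f3 _ (by omega)]
      exact ⟨by omega, hjd⟩
    · rw [if_neg hlt]
      have hjgt : g.1 < j.1 := by omega
      show j.1 - 1 + 1 < m+1 ∧ nth u (j.1 - 1 + 1) < nth u (j.1 - 1)
      have e1 : j.1 - 1 + 1 = j.1 := by omega
      rw [e1]
      have e2 : nth u j.1 = nth (Fin.insertNth g x u) (j.1+1) := by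
        have hh := f4 (j.1+1) (by omega) (by omega)
        rw [hh, show j.1 + 1 - 1 = j.1 from by omega]
      have e3 : nth u (j.1 - 1) = nth (Fin.insertNth g x u) j.1 := by
        rw [f4 _ hjgt (by omega)]

      rw [e2, e3]
      exact ⟨by omega, hjd⟩
  · intro k hk
    simp only [Finset.mem_coe, Finset.mem_filter, Finset.mem_univ, true_and] at hk ⊢
    have hkne := hexu k hk
    obtain ⟨hkb, hkd⟩ := hk
    by_cases hlt : k.1 < g.1
    · rw [if_pos hlt]
      have hklt : k.1 + 1 < g.1 := by omega
      show k.1 + 1 < m+2 ∧ nth (Fin.insertNth g x u) (k.1+1) < nth (Fin.insertNth g x u) k.1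
      rw [f3 _ hklt, f3 _ (by omega)]
      exact ⟨by omega, hkd⟩
    · rw [if_neg hlt]
      show k.1 + 1 + 1 < m+2 ∧ nth (Fin.insertNth g x u) (k.1+1+1) < nth (Fin.insertNth g x u) (k.1+1)
      have e2 : nth (Fin.insertNth g x u) (k.1+1+1) = nth u (k.1+1) := by
        have hh := f4 (k.1+1+1) (by omega) (by omega)
        rw [hh, show k.1 + 1 + 1 - 1 = k.1 + 1 from by omega]
      have e3 : nth (Fin.insertNth g x u) (k.1+1) = nth u k.1 := by
        have hh := f4 (k.1+1) (by omega) (by omega)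
        rw [hh, show k.1 + 1 - 1 = k.1 from by omega]
      rw [e2, e3]
      exact ⟨by omega, hkd⟩
  · intro j hj
    simp only [Finset.mem_coe, Finset.mem_filter, Finset.mem_univ, true_and] at hj
    obtain ⟨hjne, hjne2⟩ := hex j hj
    apply Fin.ext
    show (if (if j.1 < g.1 then j.1 else j.1 - 1) < g.1 then (if j.1 < g.1 then j.1 else j.1 - 1)
      else (if j.1 < g.1 then j.1 else j.1 - 1) + 1) = j.1
    split_ifs <;> omega
  · intro k hk
    simp only [Finset.mem_coe, Finset.mem_filter, Finset.mem_univ, true_and] at hk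
    have hkne := hexu k hk
    apply Fin.ext
    show (if (if k.1 < g.1 then k.1 else k.1 + 1) < g.1 then (if k.1 < g.1 then k.1 else k.1 + 1)
      else (if k.1 < g.1 then k.1 else k.1 + 1) - 1) = k.1
    split_ifs <;> omega

lemma insertNth_inj {u : Fin (m+1) → Fin (m+2)} {x : Fin (m+2)} {g : Fin (m+2)}
    (hu : Function.Injective u) (hx : ∀ j, u j ≠ x) :
    Function.Injective (Fin.insertNth g x u) := by
  intro a b hab
  by_cases ha : a = g
  · by_cases hb : b = g
    · rw [ha, hb]
    · exfalso
      obtain ⟨b', hb'⟩ := Fin.exists_succAbove_eq hb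
      rw [ha, Fin.insertNth_apply_same, ← hb', Fin.insertNth_apply_succAbove] at hab
      exact hx b' hab.symm
  · obtain ⟨a', ha'⟩ := Fin.exists_succAbove_eq ha
    by_cases hb : b = g
    · exfalso
      rw [hb, Fin.insertNth_apply_same, ← ha', Fin.insertNth_apply_succAbove] at hab
      exact hx a' hab
    · obtain ⟨b', hb'⟩ := Fin.exists_succAbove_eq hb
      rw [← ha', ← hb', Fin.insertNth_apply_succAbove, Fin.insertNth_apply_succAbove] at hab
      rw [← ha', ← hb', hu hab]


lemma card_filter_insert' {α : Type*} [DecidableEq α] (p : α → Prop) [DecidablePred p]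
    {a : α} {s : Finset α} (ha : a ∉ s) :
    (Finset.filter p (insert a s)).card = (if p a then 1 else 0) + (Finset.filter p s).card := by
  rw [Finset.filter_insert]
  split_ifs with h
  · rw [Finset.card_insert_of_notMem (fun hc => ha (Finset.mem_of_mem_filter _ hc))]
    omega
  · omega

lemma runs (P : ℕ → Prop) [DecidablePred P] : ∀ M : ℕ,
    ((Finset.range (M+1)).filter fun t => P t ∧ (t = 0 ∨ ¬ P (t-1))).card
      = ((Finset.range (M+1)).filter fun t => P t ∧ (t = M ∨ ¬ P (t+1))).card := by
  intro M
  induction M with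
  | zero =>
    apply congrArg
    apply Finset.filter_congr
    intro t ht
    rw [Finset.mem_range] at ht
    have : t = 0 := by omega
    subst this
    simp
  | succ M ih =>
    have hnotmem : M + 1 ∉ Finset.range (M+1) := by simp
    have eL : ((Finset.range (M+2)).filter fun t => P t ∧ (t = 0 ∨ ¬ P (t-1))).card
        = (if P (M+1) ∧ ¬ P M then 1 else 0)
          + ((Finset.range (M+1)).filter fun t => P t ∧ (t = 0 ∨ ¬ P (t-1))).card := by
      rw [Finset.range_add_one, card_filter_insert' _ hnotmem]
      congr 1
      have e : (P (M+1) ∧ (M + 1 = 0 ∨ ¬ P (M+1-1))) ↔ (P (M+1) ∧ ¬ P M) := by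
        constructor
        · rintro ⟨h1, h2 | h2⟩
          · omega
          · exact ⟨h1, by simpa using h2⟩
        · rintro ⟨h1, h2⟩
          exact ⟨h1, Or.inr (by simpa using h2)⟩
      rw [if_congr e rfl rfl]
    have eR1 : ((Finset.range (M+2)).filter fun t => P t ∧ (t = M+1 ∨ ¬ P (t+1))).card
        = (if P (M+1) then 1 else 0)
          + ((Finset.range (M+1)).filter fun t => P t ∧ ¬ P (t+1)).card := by
      rw [Finset.range_add_one, card_filter_insert' _ hnotmem]
      congr 1
      · have e : (P (M+1) ∧ (M + 1 = M+1 ∨ ¬ P (M+2))) ↔ P (M+1) := by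
          constructor
          · exact fun h => h.1
          · exact fun h => ⟨h, Or.inl rfl⟩
        rw [if_congr e rfl rfl]
      · apply congrArg
        apply Finset.filter_congr
        intro t ht
        rw [Finset.mem_range] at ht
        constructor
        · rintro ⟨h1, h2 | h2⟩
          · omega
          · exact ⟨h1, h2⟩
        · rintro ⟨h1, h2⟩
          exact ⟨h1, Or.inr h2⟩
    have eR2 : ((Finset.range (M+1)).filter fun t => P t ∧ (t = M ∨ ¬ P (t+1))).card
        = (if P M then 1 else 0)
          + ((Finset.range M).filter fun t => P t ∧ ¬ P (t+1)).card := by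
      rw [Finset.range_add_one, card_filter_insert' _ (by simp)]
      congr 1
      · have e : (P M ∧ (M = M ∨ ¬ P (M+1))) ↔ P M := by
          constructor
          · exact fun h => h.1
          · exact fun h => ⟨h, Or.inl rfl⟩
        rw [if_congr e rfl rfl]
      · apply congrArg
        apply Finset.filter_congr
        intro t ht
        rw [Finset.mem_range] at ht
        constructor
        · rintro ⟨h1, h2 | h2⟩
          · omega
          · exact ⟨h1, h2⟩
        · rintro ⟨h1, h2⟩
          exact ⟨h1, Or.inr h2⟩
    have eC : ((Finset.range (M+1)).filter fun t => P t ∧ ¬ P (t+1)).card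
        = (if P M ∧ ¬ P (M+1) then 1 else 0)
          + ((Finset.range M).filter fun t => P t ∧ ¬ P (t+1)).card := by
      rw [Finset.range_add_one, card_filter_insert' _ (by simp)]
    rw [eL, eR1, eC, ih, eR2]
    by_cases h1 : P M <;> by_cases h2 : P (M+1) <;> simp [h1, h2]


lemma nth_comp_rev' (u : Fin (m+1) → Fin (m+2)) {t : ℕ} (h : t < m+1) :
    nth (u ∘ Fin.rev) t = nth u (m - t) := by
  rw [nth_apply _ h, nth_apply _ (by omega : m - t < m + 1)]
  show (u (Fin.rev ⟨t, h⟩)).1 = _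
  have : Fin.rev (⟨t, h⟩ : Fin (m+1)) = ⟨m - t, by omega⟩ := by
    apply Fin.ext
    rw [Fin.val_rev]
    show m + 1 - (t + 1) = m - t
    omega
  rw [this]

lemma card_gapSet_eq_nat (v : Fin (m+1) → Fin (m+2)) (x : Fin (m+2)) (hv : ∀ j, v j ≠ x) :
    (gapSet v x).card = ((Finset.range (m+1)).filter fun t =>
      (x.1 < nth v t) ∧ (t = 0 ∨ ¬ (x.1 < nth v (t-1)))).card := by
  classical
  have hvne : ∀ t : ℕ, t < m+1 → nth v t ≠ x.1 := by
    intro t ht hc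
    rw [nth_apply _ ht] at hc
    exact hv ⟨t, ht⟩ (Fin.ext hc)
  apply Finset.card_nbij' (fun g : Fin (m+2) => g.1) (fun t : ℕ => ⟨min t (m+1), by omega⟩)
  · intro g hg
    rw [Finset.mem_coe, mem_gapSet_iff] at hg
    obtain ⟨hb, h1, h2⟩ := hg
    simp only [Finset.mem_coe, Finset.mem_filter, Finset.mem_range]
    refine ⟨hb, h1, ?_⟩
    rcases h2 with h2 | h2
    · exact Or.inl h2
    · right
      intro hc
      omega
  · intro t ht
    simp only [Finset.mem_coe, Finset.mem_filter, Finset.mem_range] at ht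
    obtain ⟨htr, h1, h2⟩ := ht
    rw [Finset.mem_coe, mem_gapSet_iff]
    have e : (⟨min t (m+1), by omega⟩ : Fin (m+2)).1 = t := by
      show min t (m+1) = t
      omega
    rw [e]
    refine ⟨htr, h1, ?_⟩
    rcases h2 with h2 | h2
    · exact Or.inl h2
    · right
      have hne := hvne (t-1) (by omega)
      omega
  · intro g hg
    rw [Finset.mem_coe, mem_gapSet_iff] at hg
    apply Fin.ext
    show min g.1 (m+1) = g.1
    have := hg.1
    omega
  · intro t ht
    simp only [Finset.mem_coe, Finset.mem_filter, Finset.mem_range] at ht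
    show min t (m+1) = t
    omega

lemma card_gapSet_rev (u : Fin (m+1) → Fin (m+2)) (x : Fin (m+2)) (hx : ∀ j, u j ≠ x) :
    (gapSet u x).card = (gapSet (u ∘ Fin.rev) x).card := by
  classical
  rw [card_gapSet_eq_nat u x hx, card_gapSet_eq_nat (u ∘ Fin.rev) x (fun j => hx _)]
  have hcongr : ∀ t ∈ Finset.range (m+1),
      ((x.1 < nth (u ∘ Fin.rev) t) ∧ (t = 0 ∨ ¬ (x.1 < nth (u ∘ Fin.rev) (t-1))))
        ↔ ((x.1 < nth u (m-t)) ∧ (t = 0 ∨ ¬ (x.1 < nth u (m-t+1)))) := by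
    intro t ht
    rw [Finset.mem_range] at ht
    rw [nth_comp_rev' u (by omega)]
    constructor
    · rintro ⟨h1, h2⟩
      refine ⟨h1, ?_⟩
      rcases Nat.eq_zero_or_pos t with h0 | h0
      · exact Or.inl h0
      · rcases h2 with h2 | h2
        · omega
        · right
          rw [nth_comp_rev' u (by omega : t - 1 < m+1),
            show m - (t-1) = m - t + 1 from by omega] at h2
          exact h2
    · rintro ⟨h1, h2⟩
      refine ⟨h1, ?_⟩
      rcases Nat.eq_zero_or_pos t with h0 | h0
      · exact Or.inl h0
      · rcases h2 with h2 | h2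
        · omega
        · right
          rw [nth_comp_rev' u (by omega : t - 1 < m+1),
            show m - (t-1) = m - t + 1 from by omega]
          exact h2
  rw [Finset.filter_congr hcongr]
  have hruns := runs (fun s => x.1 < nth u s) m
  rw [hruns]
  apply Finset.card_nbij' (fun t : ℕ => m - t) (fun t : ℕ => m - t)
  · intro t ht
    simp only [Finset.mem_coe, Finset.mem_filter, Finset.mem_range] at ht ⊢
    obtain ⟨htr, h1, h2⟩ := ht
    refine ⟨by omega, by rw [show m - (m - t) = t from by omega]; exact h1, ?_⟩
    rcases h2 with h2 | h2
    · exact Or.inl (by omega)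
    · right
      rw [show m - (m - t) + 1 = t + 1 from by omega]
      exact h2
  · intro t ht
    simp only [Finset.mem_coe, Finset.mem_filter, Finset.mem_range] at ht ⊢
    obtain ⟨htr, h1, h2⟩ := ht
    refine ⟨by omega, h1, ?_⟩
    rcases h2 with h2 | h2
    · exact Or.inl (by omega)
    · exact Or.inr h2
  · intro t ht
    simp only [Finset.mem_coe, Finset.mem_filter, Finset.mem_range] at ht ⊢
    omega
  · intro t ht
    simp only [Finset.mem_coe, Finset.mem_filter, Finset.mem_range] at ht ⊢
    omega


lemma coe_mul_revPerm (τ : Equiv.Perm (Fin (m+2))) :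
    ⇑(τ * (Fin.revPerm : Equiv.Perm (Fin (m+2)))) = ⇑τ ∘ Fin.rev := by
  funext j
  simp [Equiv.Perm.mul_apply]

lemma mul_revPerm_invol (τ : Equiv.Perm (Fin (m+2))) :
    τ * (Fin.revPerm : Equiv.Perm (Fin (m+2))) * (Fin.revPerm : Equiv.Perm (Fin (m+2))) = τ := by
  apply Equiv.ext
  intro j
  simp [Equiv.Perm.mul_apply]

lemma descents_mul_revPerm (τ : Equiv.Perm (Fin (m+2))) :
    descents (τ * (Fin.revPerm : Equiv.Perm (Fin (m+2)))) + descents τ = m + 1 := by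
  rw [descents_eq_dW, descents_eq_dW, coe_mul_revPerm]
  exact dW_rev _ τ.injective

lemma nth_comp_rev (w : Fin (m+2) → Fin (m+2)) {t : ℕ} (h : t < m+2) :
    nth (w ∘ Fin.rev) t = nth w (m + 1 - t) := by
  rw [nth_apply _ h, nth_apply _ (by omega : m + 1 - t < m + 2)]
  show (w (Fin.rev ⟨t, h⟩)).1 = _
  have : Fin.rev (⟨t, h⟩ : Fin (m+2)) = ⟨m + 1 - t, by omega⟩ := by
    apply Fin.ext
    rw [Fin.val_rev]
    show m + 2 - (t + 1) = m + 1 - t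
    omega
  rw [this]

lemma patB_iff_patA_rev (w : Fin (m+2) → Fin (m+2)) (q : Fin (m+2)) :
    patB w q ↔ patA (w ∘ Fin.rev) q.rev := by
  have hq := q.2
  have hqrev : (q.rev).1 = m + 1 - q.1 := by rw [Fin.val_rev]; omega
  unfold patA patB
  rw [hqrev]
  constructor
  · rintro ⟨⟨h1, h2⟩, h3⟩
    constructor
    · refine ⟨by omega, ?_⟩
      rw [nth_comp_rev _ (by omega), nth_comp_rev _ (by omega)]
      have e1 : m + 1 - (m + 1 - q.1) = q.1 := by omega
      have e2 : m + 1 - (m + 1 - q.1 + 1) = q.1 - 1 := by omega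
      rw [e1, e2]
      exact h2
    · rcases h3 with h3 | ⟨h3, h4⟩
      · left; omega
      · right
        rw [nth_comp_rev _ (by omega), nth_comp_rev _ (by omega)]
        have e1 : m + 1 - (m + 1 - q.1) = q.1 := by omega
        have e2 : m + 1 - (m + 1 - q.1 - 1) = q.1 + 1 := by omega
        rw [e1, e2]
        exact h4
  · rintro ⟨⟨h1, h2⟩, h3⟩
    rw [nth_comp_rev _ (by omega), nth_comp_rev _ (by omega)] at h2
    have e1 : m + 1 - (m + 1 - q.1) = q.1 := by omega
    have e2 : m + 1 - (m + 1 - q.1 + 1) = q.1 - 1 := by omega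
    rw [e1, e2] at h2
    constructor
    · exact ⟨by omega, h2⟩
    · rcases Nat.eq_or_lt_of_le (by omega : q.1 ≤ m + 1) with hqm | hqm
      · left; omega
      rcases h3 with h3 | h3
      · left; omega
      · right
        rw [nth_comp_rev _ (by omega), nth_comp_rev _ (by omega)] at h3
        have e1' : m + 1 - (m + 1 - q.1) = q.1 := by omega
        have e2' : m + 1 - (m + 1 - q.1 - 1) = q.1 + 1 := by omega
        rw [e1', e2'] at h3
        refine ⟨?_, h3⟩
        omega

def Fset (k : ℕ) : Finset (Equiv.Perm (Fin (m+2)) × Fin (m+2)) :=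
  Finset.univ.filter fun p => descents p.1 = k ∧ patA ⇑p.1 (p.1⁻¹ p.2)

def Gset (k : ℕ) : Finset (Equiv.Perm (Fin (m+2)) × Fin (m+2)) :=
  Finset.univ.filter fun p => descents p.1 = k ∧ patB ⇑p.1 (p.1⁻¹ p.2)

lemma descents_le_of_patA {τ : Equiv.Perm (Fin (m+2))} {q : Fin (m+2)}
    (hA : patA ⇑τ q) : descents τ ≤ m := by
  obtain ⟨⟨hb, hlt⟩, _⟩ := hA
  rw [descents_eq_dW]
  unfold dW
  have hsub : (Finset.univ.filter fun j : Fin (m+2) =>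
      j.1 + 1 < m+2 ∧ nth ⇑τ (j.1+1) < nth ⇑τ j.1)
      ⊆ (Finset.univ.erase ⟨q.1, by omega⟩).erase ⟨m+1, by omega⟩ := by
    intro j hj
    simp only [Finset.mem_filter, Finset.mem_univ, true_and] at hj
    rw [Finset.mem_erase, Finset.mem_erase]
    refine ⟨?_, ?_, Finset.mem_univ _⟩
    · intro hc
      have : j.1 = m+1 := congrArg Fin.val hc
      omega
    · intro hc
      have : j.1 = q.1 := congrArg Fin.val hc
      rw [this] at hj
      omega
  have hcard := Finset.card_le_card hsub
  have h1 : ((⟨m+1, by omega⟩ : Fin (m+2)) : Fin (m+2)) ∈ Finset.univ.erase (⟨q.1, by omega⟩ : Fin (m+2)) := by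
    rw [Finset.mem_erase]
    refine ⟨?_, Finset.mem_univ _⟩
    intro hc
    have : m + 1 = q.1 := congrArg Fin.val hc
    omega
  rw [Finset.card_erase_of_mem h1, Finset.card_erase_of_mem (Finset.mem_univ _),
    Finset.card_univ, Fintype.card_fin] at hcard
  omega

lemma C1a {b : ℕ} (hb : b ≤ m+1) : (@Gset m b).card = (@Fset m (m+1-b)).card := by
  classical
  have hrr : (Fin.revPerm : Equiv.Perm (Fin (m+2))) * Fin.revPerm = 1 := by
    apply Equiv.ext
    intro j
    simp [Equiv.Perm.mul_apply]
  have hrinv : (Fin.revPerm : Equiv.Perm (Fin (m+2)))⁻¹ = Fin.revPerm :=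
    inv_eq_of_mul_eq_one_right hrr
  have hinvap : ∀ (τ : Equiv.Perm (Fin (m+2))) (x : Fin (m+2)),
      (τ * (Fin.revPerm : Equiv.Perm (Fin (m+2))))⁻¹ x = Fin.rev (τ⁻¹ x) := by
    intro τ x
    rw [mul_inv_rev, hrinv]
    simp [Equiv.Perm.mul_apply]
  have hmem : ∀ (c d : ℕ), c + d = m + 1 → ∀ p ∈ Gset c, (p.1 * (Fin.revPerm : Equiv.Perm (Fin (m+2))), p.2) ∈ Fset d := by
    intro c d hcd p hp
    unfold Gset at hp
    unfold Fset
    rw [Finset.mem_filter] at hp ⊢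
    obtain ⟨_, h1, h2⟩ := hp
    refine ⟨Finset.mem_univ _, ?_, ?_⟩
    · show descents (p.1 * (Fin.revPerm : Equiv.Perm (Fin (m+2)))) = d
      have := descents_mul_revPerm p.1
      omega
    · show patA ⇑(p.1 * (Fin.revPerm : Equiv.Perm (Fin (m+2)))) _
      rw [patB_iff_patA_rev] at h2
      have e1 : ⇑(p.1 * (Fin.revPerm : Equiv.Perm (Fin (m+2)))) = ⇑p.1 ∘ Fin.rev :=
        coe_mul_revPerm p.1
      rw [hinvap p.1 p.2, e1]
      exact h2
  have hmem2 : ∀ (c d : ℕ), c + d = m + 1 → ∀ p ∈ Fset d, (p.1 * (Fin.revPerm : Equiv.Perm (Fin (m+2))), p.2) ∈ Gset c := by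
    intro c d hcd p hp
    unfold Fset at hp
    unfold Gset
    rw [Finset.mem_filter] at hp ⊢
    obtain ⟨_, h1, h2⟩ := hp
    refine ⟨Finset.mem_univ _, ?_, ?_⟩
    · show descents (p.1 * (Fin.revPerm : Equiv.Perm (Fin (m+2)))) = c
      have := descents_mul_revPerm p.1
      omega
    · show patB ⇑(p.1 * (Fin.revPerm : Equiv.Perm (Fin (m+2)))) _
      rw [patB_iff_patA_rev]
      have e1 : (⇑(p.1 * (Fin.revPerm : Equiv.Perm (Fin (m+2)))) ∘ Fin.rev) = ⇑p.1 := by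
        rw [coe_mul_revPerm p.1]
        funext j
        simp [Fin.rev_rev]
      have e2 : ((p.1 * (Fin.revPerm : Equiv.Perm (Fin (m+2))))⁻¹ p.2).rev = p.1⁻¹ p.2 := by
        rw [hinvap p.1 p.2, Fin.rev_rev]
      rw [e1, e2]
      exact h2
  apply Finset.card_nbij' (fun p => (p.1 * (Fin.revPerm : Equiv.Perm (Fin (m+2))), p.2))
    (fun p => (p.1 * (Fin.revPerm : Equiv.Perm (Fin (m+2))), p.2))
  · exact hmem b (m+1-b) (by omega)
  · exact hmem2 b (m+1-b) (by omega)
  · intro p hp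
    show (p.1 * _ * _, p.2) = p
    rw [mul_revPerm_invol]
  · intro p hp
    show (p.1 * _ * _, p.2) = p
    rw [mul_revPerm_invol]

def pairSet (k : ℕ) : Finset ((Fin (m+1) → Fin (m+2)) × Fin (m+2)) :=
  Finset.univ.filter fun pu =>
    Function.Injective pu.1 ∧ (∀ j, pu.1 j ≠ pu.2) ∧ dW pu.1 = k

noncomputable def toPerm (f : Fin (m+2) → Fin (m+2)) : Equiv.Perm (Fin (m+2)) :=
  if h : Function.Bijective f then Equiv.ofBijective f h else 1

lemma toPerm_coe {f : Fin (m+2) → Fin (m+2)} (h : Function.Bijective f) :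
    ⇑(toPerm f) = f := by
  unfold toPerm
  rw [dif_pos h]
  rfl

lemma Fset_card_sigma (k : ℕ) :
    (@Fset m k).card = ((@pairSet m k).sigma fun pu => gapSet pu.1 pu.2).card := by
  classical
  apply Finset.card_nbij'
    (fun p : Equiv.Perm (Fin (m+2)) × Fin (m+2) =>
      (⟨(Fin.removeNth (p.1⁻¹ p.2) ⇑p.1, p.2), p.1⁻¹ p.2⟩ :
        Σ _ : (Fin (m+1) → Fin (m+2)) × Fin (m+2), Fin (m+2)))
    (fun s : Σ _ : (Fin (m+1) → Fin (m+2)) × Fin (m+2), Fin (m+2) =>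
      (toPerm (Fin.insertNth s.2 s.1.2 s.1.1), s.1.2))
  · rintro ⟨τ, x⟩ hp
    unfold Fset at hp
    rw [Finset.mem_coe, Finset.mem_filter] at hp
    obtain ⟨_, hd, hA⟩ := hp
    have hτq : τ (τ⁻¹ x) = x := Equiv.apply_symm_apply τ x
    have hins : Fin.insertNth (τ⁻¹ x) x (Fin.removeNth (τ⁻¹ x) ⇑τ) = ⇑τ := by
      have hh := Fin.insertNth_self_removeNth (τ⁻¹ x) ⇑τ
      rwa [show (⇑τ (τ⁻¹ x)) = x from hτq] at hh
    have hgap : (τ⁻¹ x) ∈ gapSet (Fin.removeNth (τ⁻¹ x) ⇑τ) x := by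
      unfold gapSet
      rw [Finset.mem_filter]
      refine ⟨Finset.mem_univ _, ?_⟩
      rw [hins]
      exact hA
    rw [Finset.mem_coe, Finset.mem_sigma]
    constructor
    · unfold pairSet
      rw [Finset.mem_filter]
      refine ⟨Finset.mem_univ _, ?_, ?_, ?_⟩
      · exact fun a b hab => Fin.succAbove_right_injective (τ.injective hab)
      · intro j hc
        exact Fin.succAbove_ne (τ⁻¹ x) j (τ.injective (hc.trans hτq.symm))
      · have hh := dW_insertNth hgap
        rw [hins, ← descents_eq_dW, hd] at hh
        exact hh.symm
    · exact hgap
  · rintro ⟨⟨u, x⟩, g⟩ hs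
    rw [Finset.mem_coe, Finset.mem_sigma] at hs
    obtain ⟨hpu, hg⟩ := hs
    unfold pairSet at hpu
    rw [Finset.mem_filter] at hpu
    obtain ⟨_, hu, hav, hdW⟩ := hpu
    have hbij : Function.Bijective (Fin.insertNth g x u) :=
      (Finite.injective_iff_bijective).mp (insertNth_inj hu hav)
    have hcoe : ⇑(toPerm (Fin.insertNth g x u)) = Fin.insertNth g x u := toPerm_coe hbij
    have hπg : toPerm (Fin.insertNth g x u) g = x := by
      show ⇑(toPerm (Fin.insertNth g x u)) g = x
      rw [hcoe, Fin.insertNth_apply_same]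
    have hπinv : (toPerm (Fin.insertNth g x u))⁻¹ x = g := by
      apply Equiv.Perm.inv_eq_iff_eq.mpr
      exact hπg.symm
    unfold Fset
    rw [Finset.mem_coe, Finset.mem_filter]
    refine ⟨Finset.mem_univ _, ?_, ?_⟩
    · show descents (toPerm (Fin.insertNth g x u)) = k
      rw [descents_eq_dW, hcoe, dW_insertNth hg, hdW]
    · show patA ⇑(toPerm (Fin.insertNth g x u)) _
      rw [hcoe]
      show patA _ ((toPerm (Fin.insertNth g x u))⁻¹ x)
      rw [hπinv]
      unfold gapSet at hg
      rw [Finset.mem_filter] at hg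
      exact hg.2
  · rintro ⟨τ, x⟩ hp
    unfold Fset at hp
    rw [Finset.mem_coe, Finset.mem_filter] at hp
    have hτq : τ (τ⁻¹ x) = x := Equiv.apply_symm_apply τ x
    have hins : Fin.insertNth (τ⁻¹ x) x (Fin.removeNth (τ⁻¹ x) ⇑τ) = ⇑τ := by
      have hh := Fin.insertNth_self_removeNth (τ⁻¹ x) ⇑τ
      rwa [show (⇑τ (τ⁻¹ x)) = x from hτq] at hh
    show (toPerm (Fin.insertNth (τ⁻¹ x) x (Fin.removeNth (τ⁻¹ x) ⇑τ)), x) = (τ, x)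
    rw [hins]
    have : toPerm ⇑τ = τ := by
      apply Equiv.coe_fn_injective
      show ⇑(toPerm ⇑τ) = ⇑τ
      rw [toPerm_coe τ.bijective]
    rw [this]
  · rintro ⟨⟨u, x⟩, g⟩ hs
    rw [Finset.mem_coe, Finset.mem_sigma] at hs
    obtain ⟨hpu, hg⟩ := hs
    unfold pairSet at hpu
    rw [Finset.mem_filter] at hpu
    obtain ⟨_, hu, hav, hdW⟩ := hpu
    have hbij : Function.Bijective (Fin.insertNth g x u) :=
      (Finite.injective_iff_bijective).mp (insertNth_inj hu hav)
    have hcoe : ⇑(toPerm (Fin.insertNth g x u)) = Fin.insertNth g x u := toPerm_coe hbij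
    have hπg : toPerm (Fin.insertNth g x u) g = x := by
      show ⇑(toPerm (Fin.insertNth g x u)) g = x
      rw [hcoe, Fin.insertNth_apply_same]
    have hπinv : (toPerm (Fin.insertNth g x u))⁻¹ x = g := by
      apply Equiv.Perm.inv_eq_iff_eq.mpr
      exact hπg.symm
    show (⟨(Fin.removeNth ((toPerm (Fin.insertNth g x u))⁻¹ x) ⇑(toPerm (Fin.insertNth g x u)), x),
        (toPerm (Fin.insertNth g x u))⁻¹ x⟩ :
        Σ _ : (Fin (m+1) → Fin (m+2)) × Fin (m+2), Fin (m+2)) = ⟨(u, x), g⟩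
    rw [hπinv, hcoe, Fin.removeNth_insertNth]

lemma C1b {k : ℕ} (hk : k ≤ m) : (@Fset m k).card = (@Fset m (m-k)).card := by
  classical
  rw [Fset_card_sigma k, Fset_card_sigma (m-k), Finset.card_sigma, Finset.card_sigma]
  have step1 : ∑ pu ∈ @pairSet m k, (gapSet pu.1 pu.2).card
      = ∑ pu ∈ @pairSet m k, (gapSet (pu.1 ∘ Fin.rev) pu.2).card := by
    apply Finset.sum_congr rfl
    intro pu hpu
    unfold pairSet at hpu
    rw [Finset.mem_filter] at hpu
    exact card_gapSet_rev pu.1 pu.2 hpu.2.2.1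
  rw [step1]
  apply Finset.sum_nbij' (fun pu => (pu.1 ∘ Fin.rev, pu.2)) (fun pu => (pu.1 ∘ Fin.rev, pu.2))
  · intro pu hpu
    unfold pairSet at hpu ⊢
    rw [Finset.mem_filter] at hpu ⊢
    obtain ⟨_, hu, hav, hdW⟩ := hpu
    refine ⟨Finset.mem_univ _, hu.comp Fin.rev_injective, fun j => hav _, ?_⟩
    show dW (pu.1 ∘ Fin.rev) = m - k
    have := dW_rev pu.1 hu
    omega
  · intro pu hpu
    unfold pairSet at hpu ⊢
    rw [Finset.mem_filter] at hpu ⊢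
    obtain ⟨_, hu, hav, hdW⟩ := hpu
    refine ⟨Finset.mem_univ _, hu.comp Fin.rev_injective, fun j => hav _, ?_⟩
    show dW (pu.1 ∘ Fin.rev) = k
    have := dW_rev pu.1 hu
    omega
  · intro pu _
    have : (pu.1 ∘ Fin.rev) ∘ Fin.rev = pu.1 := by
      funext j
      show pu.1 ((j.rev).rev) = pu.1 j
      rw [Fin.rev_rev]
    rw [Prod.ext_iff]
    exact ⟨this, rfl⟩
  · intro pu _
    have : (pu.1 ∘ Fin.rev) ∘ Fin.rev = pu.1 := by
      funext j
      show pu.1 ((j.rev).rev) = pu.1 j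
      rw [Fin.rev_rev]
    rw [Prod.ext_iff]
    exact ⟨this, rfl⟩
  · intro pu _
    rfl

lemma C1 (k : ℕ) : (@Fset m k).card = (@Gset m (k+1)).card := by
  rcases le_or_gt k m with hk | hk
  · rw [C1a (b := k+1) (by omega)]
    have : m + 1 - (k+1) = m - k := by omega
    rw [this]
    exact C1b hk
  · have hF : (@Fset m k) = ∅ := by
      apply Finset.eq_empty_of_forall_notMem
      intro p hp
      unfold Fset at hp
      rw [Finset.mem_filter] at hp
      have := descents_le_of_patA hp.2.2
      omega
    have hG : (@Gset m (k+1)) = ∅ := by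
      apply Finset.eq_empty_of_forall_notMem
      intro p hp
      unfold Gset at hp
      rw [Finset.mem_filter] at hp
      have := descents_le p.1
      omega
    rw [hF, hG]


def Uset (a b : ℤ) : Finset (Equiv.Perm (Fin (m+2)) × Fin (m+2)) :=
  Finset.univ.filter fun p =>
    (descents p.1 : ℤ) = a ∧ (descents ((cyc p.2)⁻¹ * p.1) : ℤ) = b

lemma Uset_eq_Fset {a : ℤ} (ha : 0 ≤ a) : @Uset m a (a+1) = @Fset m a.toNat := by
  ext p
  unfold Uset Fset
  simp only [Finset.mem_filter, Finset.mem_univ, true_and]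
  have hL1 := L1 p.1 p.2
  constructor
  · rintro ⟨h1, h2⟩
    refine ⟨by omega, ?_⟩
    by_contra hA
    rw [if_neg hA] at hL1
    by_cases hB : patB ⇑p.1 (p.1⁻¹ p.2)
    · rw [if_pos hB] at hL1; omega
    · rw [if_neg hB] at hL1; omega
  · rintro ⟨h1, hA⟩
    rw [if_pos hA, if_neg (fun hB => patA_patB_excl hA hB)] at hL1
    constructor <;> omega

lemma Uset_eq_Gset {a : ℤ} (ha : 0 ≤ a) : @Uset m (a+1) a = @Gset m (a.toNat+1) := by
  ext p
  unfold Uset Gset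
  simp only [Finset.mem_filter, Finset.mem_univ, true_and]
  have hL1 := L1 p.1 p.2
  constructor
  · rintro ⟨h1, h2⟩
    refine ⟨by omega, ?_⟩
    by_contra hB
    rw [if_neg hB] at hL1
    by_cases hA : patA ⇑p.1 (p.1⁻¹ p.2)
    · rw [if_pos hA] at hL1; omega
    · rw [if_neg hA] at hL1; omega
  · rintro ⟨h1, hB⟩
    rw [if_pos hB, if_neg (fun hA => patA_patB_excl hA hB)] at hL1
    constructor <;> omega

lemma Uset_far {a b : ℤ} (h : b ≥ a + 2 ∨ a ≥ b + 2) : @Uset m a b = ∅ := by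
  apply Finset.eq_empty_of_forall_notMem
  intro p hp
  unfold Uset at hp
  rw [Finset.mem_filter] at hp
  obtain ⟨_, h1, h2⟩ := hp
  have hL1 := L1 p.1 p.2
  split_ifs at hL1 <;> omega

lemma Uset_symm (a b : ℤ) : (@Uset m a b).card = (@Uset m b a).card := by
  have key : ∀ c : ℤ, (@Uset m c (c+1)).card = (@Uset m (c+1) c).card := by
    intro c
    rcases le_or_gt 0 c with hc | hc
    · rw [Uset_eq_Fset hc, Uset_eq_Gset hc]
      exact C1 c.toNat
    · have h1 : @Uset m c (c+1) = ∅ := by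
        apply Finset.eq_empty_of_forall_notMem
        intro p hp
        unfold Uset at hp
        rw [Finset.mem_filter] at hp
        omega
      have h2 : @Uset m (c+1) c = ∅ := by
        apply Finset.eq_empty_of_forall_notMem
        intro p hp
        unfold Uset at hp
        rw [Finset.mem_filter] at hp
        omega
      rw [h1, h2]
  rcases eq_or_ne a b with rfl | hne
  · rfl
  rcases (by omega : b = a + 1 ∨ a = b + 1 ∨ (b ≥ a + 2 ∨ a ≥ b + 2)) with hb | hb | hb
  · subst hb; exact key a
  · subst hb; exact (key b).symm
  · rw [Uset_far hb, Uset_far (by omega)]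

end DPE

/-- For `n ≥ 2`, with `π` uniform on `S_n` and `I` uniform on `{1,…,n}`,
the pair `(Des(π⁻¹), Des((π∘c_I)⁻¹))` is exchangeable. -/
theorem descents_pair_exchangeable {n : ℕ} (hn : 2 ≤ n) :
    ∀ a b : ℤ,
      Nat.card {p : Equiv.Perm (Fin n) × Fin n //
          (descents p.1⁻¹ : ℤ) = a ∧ (descents ((p.1 * cyc p.2)⁻¹) : ℤ) = b}
        = Nat.card {p : Equiv.Perm (Fin n) × Fin n //
          (descents p.1⁻¹ : ℤ) = b ∧ (descents ((p.1 * cyc p.2)⁻¹) : ℤ) = a} := by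
  obtain ⟨m, rfl⟩ : ∃ m, n = m + 2 := ⟨n - 2, by omega⟩
  intro a b
  have hconv : ∀ (c d : ℤ), Nat.card {p : Equiv.Perm (Fin (m+2)) × Fin (m+2) //
      (descents p.1⁻¹ : ℤ) = c ∧ (descents ((p.1 * cyc p.2)⁻¹) : ℤ) = d}
        = (@DPE.Uset m c d).card := by
    intro c d
    classical
    rw [Nat.card_eq_fintype_card, Fintype.card_subtype]
    apply Finset.card_nbij' (fun p => (p.1⁻¹, p.2)) (fun p => (p.1⁻¹, p.2))
    · intro p hp
      simp only [Finset.mem_coe, Finset.mem_filter, Finset.mem_univ, true_and] at hp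
      unfold DPE.Uset
      rw [Finset.mem_coe, Finset.mem_filter]
      refine ⟨Finset.mem_univ _, hp.1, ?_⟩
      have e : (cyc p.2)⁻¹ * p.1⁻¹ = (p.1 * cyc p.2)⁻¹ := (mul_inv_rev p.1 (cyc p.2)).symm
      show (descents ((cyc p.2)⁻¹ * p.1⁻¹) : ℤ) = d
      rw [e]
      exact hp.2
    · intro p hp
      unfold DPE.Uset at hp
      rw [Finset.mem_coe, Finset.mem_filter] at hp
      obtain ⟨_, h1, h2⟩ := hp
      simp only [Finset.mem_coe, Finset.mem_filter, Finset.mem_univ, true_and]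
      constructor
      · show (descents ((p.1⁻¹)⁻¹ : Equiv.Perm (Fin (m+2))) : ℤ) = c
        rw [inv_inv]
        exact h1
      · show (descents ((p.1⁻¹ * cyc p.2)⁻¹ : Equiv.Perm (Fin (m+2))) : ℤ) = d
        rw [mul_inv_rev, inv_inv]
        exact h2
    · intro p _
      show (p.1⁻¹⁻¹, p.2) = p
      rw [inv_inv]
    · intro p _
      show (p.1⁻¹⁻¹, p.2) = p
      rw [inv_inv]
  rw [hconv a b, hconv b a]
  exact DPE.Uset_symm a b
end

section
/- Let n ≥ 2 and let π be uniform on S_n and I uniform on {1,…,n}, independently. Then the pair (Inv(π⁻¹), Inv((π∘c_I)⁻¹)) is exchangeable: for all integers a, b, the number of pairs (π, i) ∈ S_n × {1,…,n} with Inv(π⁻¹) = a and Inv((π∘c_i)⁻¹) = b equals the number of pairs (π, i) with Inv(π⁻¹) = b and Inv((π∘c_i)⁻¹) = a. -/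
namespace Inv11
open Finset

variable {n : ℕ}

def code (π : Equiv.Perm (Fin n)) (v : Fin n) : ℕ :=
  (Finset.univ.filter fun u => v < u ∧ π u < π v).card

def acode (π : Equiv.Perm (Fin n)) (v : Fin n) : ℕ :=
  (Finset.univ.filter fun u => v < u ∧ π v < π u).card

lemma code_add_acode (π : Equiv.Perm (Fin n)) (v : Fin n) :
    code π v + acode π v = n - 1 - v.1 := by
  rw [code, acode, ← Finset.card_union_of_disjoint ?hd]
  case hd =>
    rw [Finset.disjoint_left]
    rintro u hu hu'
    simp only [Finset.mem_filter] at hu hu'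
    exact absurd (hu.2.2.trans hu'.2.2) (lt_irrefl _)
  rw [← Fin.card_Ioi v]
  congr 1
  ext u
  simp only [Finset.mem_union, Finset.mem_filter, Finset.mem_univ, true_and, Finset.mem_Ioi]
  constructor
  · rintro (⟨h, _⟩ | ⟨h, _⟩) <;> exact h
  · intro h
    have hne : π u ≠ π v := fun hval => (ne_of_gt h) (π.injective hval)
    rcases lt_or_gt_of_ne hne with h' | h'
    · exact Or.inl ⟨h, h'⟩
    · exact Or.inr ⟨h, h'⟩

lemma code_lt (π : Equiv.Perm (Fin n)) (v : Fin n) : code π v < n - v.1 := by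
  have h1 : code π v ≤ (Finset.Ioi v).card := by
    apply Finset.card_le_card
    intro u hu
    simp only [Finset.mem_filter] at hu
    simpa using hu.2.1
  rw [Fin.card_Ioi] at h1
  have := v.2
  omega

lemma cyc_inv_val (i x : Fin n) :
    (((cyc i)⁻¹ : Equiv.Perm (Fin n)) x).1
      = if x = i then n - 1 else if x.1 < i.1 then x.1 else x.1 - 1 := by
  obtain ⟨m, rfl⟩ : ∃ m, n = m + 1 := ⟨n - 1, by have := i.2; omega⟩
  have hrev : ∀ y : Fin (m + 1), (Fin.rev y).1 = m - y.1 := fun y => by simp [Fin.rev]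
  have happ : ((cyc i)⁻¹ : Equiv.Perm (Fin (m + 1))) x
      = Fin.rev (Fin.cycleRange i.rev (Fin.rev x)) := rfl
  rw [happ]
  rcases lt_trichotomy x i with h | h | h
  · -- x < i : rev x > rev i
    have h' : i.rev < x.rev := by simpa using h
    rw [Fin.cycleRange_of_gt h', Fin.rev_rev]
    have hx := x.2; have hi := i.2
    rw [if_neg (ne_of_lt h), if_pos (Fin.lt_def.mp h)]
  · subst h
    rw [Fin.cycleRange_self]
    simp only [if_pos rfl]
    rw [hrev]
    simp
  · -- i < x : rev x < rev i
    have h' : x.rev < i.rev := by simpa using h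
    have hlt : (Fin.cycleRange i.rev x.rev).1 = x.rev.1 + 1 := Fin.coe_cycleRange_of_lt h'
    have hxv := Fin.lt_def.mp h
    have hx := x.2; have hi := i.2
    rw [if_neg (ne_of_gt h), if_neg (by omega)]
    rw [hrev]
    rw [hlt, hrev]
    omega


-- pin first coordinate
lemma card_pin_fst (i : Fin n) (Q : Fin n → Prop) [DecidablePred Q] :
    (Finset.univ.filter fun p : Fin n × Fin n => p.1 = i ∧ Q p.2).card
      = (Finset.univ.filter Q).card := by
  have : (Finset.univ.filter fun p : Fin n × Fin n => p.1 = i ∧ Q p.2)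
      = (Finset.univ.filter Q).map ⟨fun t => (i, t), fun a b h => by simpa using h⟩ := by
    ext p
    simp only [Finset.mem_filter, Finset.mem_univ, true_and, Finset.mem_map,
      Function.Embedding.coeFn_mk]
    constructor
    · rintro ⟨h1, h2⟩
      exact ⟨p.2, h2, by rw [← h1]; rfl⟩
    · rintro ⟨t, ht, rfl⟩
      exact ⟨rfl, ht⟩
  rw [this, Finset.card_map]

lemma card_pin_snd (i : Fin n) (Q : Fin n → Prop) [DecidablePred Q] :
    (Finset.univ.filter fun p : Fin n × Fin n => p.2 = i ∧ Q p.1).card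
      = (Finset.univ.filter Q).card := by
  have : (Finset.univ.filter fun p : Fin n × Fin n => p.2 = i ∧ Q p.1)
      = (Finset.univ.filter Q).map ⟨fun t => (t, i), fun a b h => by simpa using h⟩ := by
    ext p
    simp only [Finset.mem_filter, Finset.mem_univ, true_and, Finset.mem_map,
      Function.Embedding.coeFn_mk]
    constructor
    · rintro ⟨h1, h2⟩
      exact ⟨p.1, h2, by rw [← h1]; rfl⟩
    · rintro ⟨t, ht, rfl⟩
      exact ⟨rfl, ht⟩
  rw [this, Finset.card_map]

lemma inversions_inv (π : Equiv.Perm (Fin n)) : inversions π⁻¹ = inversions π := by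
  rw [inversions, inversions]
  apply Finset.card_bij' (fun p _ => (π⁻¹ p.2, π⁻¹ p.1)) (fun q _ => (π q.2, π q.1))
  · intro p hp
    simp only [Finset.mem_filter, Finset.mem_univ, true_and] at hp ⊢
    simpa using And.intro hp.2 hp.1
  · intro q hq
    simp only [Finset.mem_filter, Finset.mem_univ, true_and] at hq ⊢
    simpa using And.intro hq.2 hq.1
  · intro p _; simp
  · intro q _; simp

lemma inversions_eq_sum_code (π : Equiv.Perm (Fin n)) :
    inversions π = ∑ v, code π v := by
  rw [inversions]
  rw [Finset.card_eq_sum_card_fiberwise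
    (f := Prod.fst) (t := Finset.univ) (fun p _ => Finset.mem_univ _)]
  apply Finset.sum_congr rfl
  intro v _
  rw [Finset.filter_filter]
  have he : (Finset.univ.filter fun p : Fin n × Fin n => (p.1 < p.2 ∧ π p.2 < π p.1) ∧ p.1 = v)
      = Finset.univ.filter fun p : Fin n × Fin n => p.1 = v ∧ (v < p.2 ∧ π p.2 < π v) := by
    ext p
    simp only [Finset.mem_filter, Finset.mem_univ, true_and]
    constructor
    · rintro ⟨⟨h1, h2⟩, rfl⟩
      exact ⟨rfl, h1, h2⟩
    · rintro ⟨rfl, h1, h2⟩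
      exact ⟨⟨h1, h2⟩, rfl⟩
  rw [he]; exact card_pin_fst v (fun t => v < t ∧ π t < π v)


/-- The "base" set: inversions of `π` avoiding the index `i`. -/
def base (π : Equiv.Perm (Fin n)) (i : Fin n) : Finset (Fin n × Fin n) :=
  Finset.univ.filter fun p => p.1 < p.2 ∧ π p.2 < π p.1 ∧ p.1 ≠ i ∧ p.2 ≠ i

lemma key_A (π : Equiv.Perm (Fin n)) (i : Fin n) :
    inversions (π * cyc i)
      = (base π i).card + (Finset.univ.filter fun s => π i < π s).card := by
  -- step 1: reindex by cyc i
  have h1 : inversions (π * cyc i)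
      = (Finset.univ.filter fun q : Fin n × Fin n =>
          ((cyc i)⁻¹ q.1) < ((cyc i)⁻¹ q.2) ∧ π q.2 < π q.1).card := by
    rw [inversions]
    apply Finset.card_bij' (fun p _ => (cyc i p.1, cyc i p.2))
      (fun q _ => ((cyc i)⁻¹ q.1, (cyc i)⁻¹ q.2))
    · intro p hp
      simp only [Finset.mem_filter, Finset.mem_univ, true_and, Equiv.Perm.inv_def, Equiv.symm_apply_apply] at hp ⊢
      exact ⟨hp.1, hp.2⟩
    · intro q hq
      simp only [Finset.mem_filter, Finset.mem_univ, true_and, Equiv.Perm.mul_apply,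
        Equiv.Perm.inv_def, Equiv.apply_symm_apply] at hq ⊢
      exact Finset.mem_filter.mpr ⟨Finset.mem_univ _, hq.1, by simpa only [Equiv.apply_symm_apply] using hq.2⟩
    · intro p _; simp
    · intro q _; simp
  rw [h1]
  -- step 2: decompose
  have h2 : (Finset.univ.filter fun q : Fin n × Fin n =>
          ((cyc i)⁻¹ q.1) < ((cyc i)⁻¹ q.2) ∧ π q.2 < π q.1)
      = base π i ∪ (Finset.univ.filter fun p : Fin n × Fin n => p.2 = i ∧ π i < π p.1) := by
    ext p
    obtain ⟨s, t⟩ := p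
    simp only [base, Finset.mem_union, Finset.mem_filter, Finset.mem_univ, true_and]
    have hs := cyc_inv_val i s
    have ht := cyc_inv_val i t
    have hsv := s.2; have htv := t.2; have hiv := i.2
    have hct := (((cyc i)⁻¹ : Equiv.Perm (Fin n)) t).2
    constructor
    · rintro ⟨hlt, hπ⟩
      rw [Fin.lt_def, hs, ht] at hlt
      by_cases hsi : s = i
      · exfalso
        rw [if_pos hsi] at hlt
        split_ifs at hlt <;> omega
      · by_cases hti : t = i
        · refine Or.inr ⟨hti, ?_⟩
          rw [← hti]; exact hπ
        · left
          refine ⟨?_, hπ, hsi, hti⟩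
          rw [Fin.lt_def]
          rw [if_neg hsi, if_neg hti] at hlt
          have hsi' : s.1 ≠ i.1 := fun h => hsi (Fin.ext h)
          have hti' : t.1 ≠ i.1 := fun h => hti (Fin.ext h)
          split_ifs at hlt <;> omega
    · rintro (⟨hlt, hπ, hsi, hti⟩ | ⟨hti, hπ⟩)
      · refine ⟨?_, hπ⟩
        rw [Fin.lt_def] at hlt
        rw [Fin.lt_def, hs, ht, if_neg hsi, if_neg hti]
        have hsi' : s.1 ≠ i.1 := fun h => hsi (Fin.ext h)
        have hti' : t.1 ≠ i.1 := fun h => hti (Fin.ext h)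
        split_ifs <;> omega
      · have hsi : s ≠ i := by
          intro h
          rw [h] at hπ
          exact absurd hπ (lt_irrefl _)
        constructor
        · rw [Fin.lt_def, hs, ht, if_neg hsi, if_pos hti]
          have hsi' : s.1 ≠ i.1 := fun h => hsi (Fin.ext h)
          split_ifs <;> omega
        · rw [hti]; exact hπ
  rw [h2, Finset.card_union_of_disjoint, card_pin_snd i (fun s => π i < π s)]
  rw [Finset.disjoint_left]
  rintro p hp hp'
  simp only [base, Finset.mem_filter] at hp hp'
  exact hp.2.2.2.2 hp'.2.1

lemma key_B (π : Equiv.Perm (Fin n)) (i : Fin n) :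
    inversions π = (base π i).card + code π i
      + (Finset.univ.filter fun s => s < i ∧ π i < π s).card := by
  rw [inversions]
  have h2 : (Finset.univ.filter fun p : Fin n × Fin n => p.1 < p.2 ∧ π p.2 < π p.1)
      = (base π i ∪ (Finset.univ.filter fun p : Fin n × Fin n => p.1 = i ∧ (i < p.2 ∧ π p.2 < π i)))
        ∪ (Finset.univ.filter fun p : Fin n × Fin n => p.2 = i ∧ (p.1 < i ∧ π i < π p.1)) := by
    ext p
    obtain ⟨s, t⟩ := p
    simp only [base, Finset.mem_union, Finset.mem_filter, Finset.mem_univ, true_and]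
    constructor
    · rintro ⟨hlt, hπ⟩
      by_cases hsi : s = i
      · exact Or.inl (Or.inr ⟨hsi, by rw [← hsi]; exact hlt, by rw [← hsi]; exact hπ⟩)
      · by_cases hti : t = i
        · exact Or.inr ⟨hti, by rw [← hti]; exact hlt, by rw [← hti]; exact hπ⟩
        · exact Or.inl (Or.inl ⟨hlt, hπ, hsi, hti⟩)
    · rintro ((⟨hlt, hπ, _, _⟩ | ⟨rfl, h1, h2⟩) | ⟨rfl, h1, h2⟩)
      · exact ⟨hlt, hπ⟩
      · exact ⟨h1, h2⟩
      · exact ⟨h1, h2⟩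
  rw [h2, Finset.card_union_of_disjoint, Finset.card_union_of_disjoint,
    card_pin_fst i (fun t => i < t ∧ π t < π i), card_pin_snd i (fun s => s < i ∧ π i < π s), code]
  · rw [Finset.disjoint_left]
    rintro p hp hp'
    simp only [base, Finset.mem_filter] at hp hp'
    exact hp.2.2.2.1 hp'.2.1
  · rw [Finset.disjoint_left]
    rintro p hp hp'
    simp only [base, Finset.mem_union, Finset.mem_filter] at hp hp'
    rcases hp with ⟨_, _, _, _, hti⟩ | ⟨_, rfl, h1, _⟩
    · exact hti hp'.2.1
    · -- p.1 = i and p.2 = i with i < p.2 : contradiction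
      rw [hp'.2.1] at h1
      exact absurd h1 (lt_irrefl _)

lemma key_split (π : Equiv.Perm (Fin n)) (i : Fin n) :
    (Finset.univ.filter fun s => π i < π s).card
      = (Finset.univ.filter fun s => s < i ∧ π i < π s).card + acode π i := by
  rw [acode, ← Finset.card_union_of_disjoint ?hd]
  case hd =>
    rw [Finset.disjoint_left]
    rintro u hu hu'
    simp only [Finset.mem_filter] at hu hu'
    exact absurd (hu.2.1.trans hu'.2.1) (lt_irrefl _)
  congr 1
  ext u
  simp only [Finset.mem_union, Finset.mem_filter, Finset.mem_univ, true_and]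
  constructor
  · intro h
    have hne : u ≠ i := by
      rintro rfl
      exact absurd h (lt_irrefl _)
    rcases lt_or_gt_of_ne hne with h' | h'
    · exact Or.inl ⟨h', h⟩
    · exact Or.inr ⟨h', h⟩
  · rintro (⟨_, h⟩ | ⟨_, h⟩) <;> exact h

lemma key (π : Equiv.Perm (Fin n)) (i : Fin n) :
    inversions (π * cyc i) + code π i = inversions π + acode π i := by
  rw [key_A π i, key_B π i, key_split π i]
  ring


/-- The star identity: `(π v) = #{u < v : π u < π v} + code π v`. -/
lemma star (π : Equiv.Perm (Fin n)) (v : Fin n) :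
    (π v).1 = (Finset.univ.filter fun u => u < v ∧ π u < π v).card + code π v := by
  have h1 : (Finset.univ.filter fun u => π u < π v).card = (π v).1 := by
    have he : (Finset.univ.filter fun u => π u < π v).card
        = (Finset.univ.filter fun y => y < π v).card := by
      apply Finset.card_equiv π
      intro u
      simp
    rw [he]
    have : (Finset.univ.filter fun y => y < π v) = Finset.Iio (π v) := by
      ext y; simp
    rw [this, Fin.card_Iio]
  have h2 : (Finset.univ.filter fun u => π u < π v)
      = (Finset.univ.filter fun u => u < v ∧ π u < π v)
        ∪ (Finset.univ.filter fun u => v < u ∧ π u < π v) := by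
    ext u
    simp only [Finset.mem_union, Finset.mem_filter, Finset.mem_univ, true_and]
    constructor
    · intro h
      have hne : u ≠ v := by
        rintro rfl
        exact absurd h (lt_irrefl _)
      rcases lt_or_gt_of_ne hne with h' | h'
      · exact Or.inl ⟨h', h⟩
      · exact Or.inr ⟨h', h⟩
    · rintro (⟨_, h⟩ | ⟨_, h⟩) <;> exact h
  rw [← h1, h2, Finset.card_union_of_disjoint, code]
  rw [Finset.disjoint_left]
  rintro u hu hu'
  simp only [Finset.mem_filter] at hu hu'
  exact absurd (hu.2.1.trans hu'.2.1) (lt_irrefl _)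

lemma code_inj_aux (π τ : Equiv.Perm (Fin n)) (v : Fin n)
    (hcode : code π v = code τ v)
    (hprev : ∀ u, u < v → π u = τ u)
    (hlt : π v < τ v) : False := by
  have hstarπ := star π v
  have hstarτ := star τ v
  -- the filter for τ equals the filter for π at the point τ v
  have hfeq : (Finset.univ.filter fun u => u < v ∧ τ u < τ v)
      = (Finset.univ.filter fun u => u < v ∧ π u < τ v) := by
    apply Finset.filter_congr
    intro u _
    constructor
    · rintro ⟨h1, h2⟩; exact ⟨h1, by rwa [hprev u h1]⟩
    · rintro ⟨h1, h2⟩; exact ⟨h1, by rwa [← hprev u h1]⟩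
  rw [hfeq] at hstarτ
  -- split the π-filter at τ v into below π v and the middle interval
  have hsplit : (Finset.univ.filter fun u => u < v ∧ π u < τ v)
      = (Finset.univ.filter fun u => u < v ∧ π u < π v)
        ∪ (Finset.univ.filter fun u => u < v ∧ π v ≤ π u ∧ π u < τ v) := by
    ext u
    simp only [Finset.mem_union, Finset.mem_filter, Finset.mem_univ, true_and]
    constructor
    · rintro ⟨h1, h2⟩
      rcases lt_or_ge (π u) (π v) with h' | h'
      · exact Or.inl ⟨h1, h'⟩
      · exact Or.inr ⟨h1, h', h2⟩
    · rintro (⟨h1, h2⟩ | ⟨h1, h2, h3⟩)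
      · exact ⟨h1, h2.trans hlt⟩
      · exact ⟨h1, h3⟩
  rw [hsplit, Finset.card_union_of_disjoint ?hd] at hstarτ
  case hd =>
    rw [Finset.disjoint_left]
    rintro u hu hu'
    simp only [Finset.mem_filter] at hu hu'
    exact absurd hu.2.2 (not_lt_of_ge hu'.2.2.1)
  -- bound the middle interval
  have hmid : (Finset.univ.filter fun u => u < v ∧ π v ≤ π u ∧ π u < τ v).card
      ≤ (Finset.Ico ((π v).1 + 1) (τ v).1).card := by
    apply Finset.card_le_card_of_injOn (fun u => (π u).1)
    · intro u hu
      simp only [Finset.mem_coe, Finset.mem_filter, Finset.mem_univ, true_and] at hu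
      simp only [Finset.mem_coe, Finset.mem_Ico]
      obtain ⟨h1, h2, h3⟩ := hu
      have hne : π u ≠ π v := fun h => (ne_of_lt h1) (π.injective h)
      have h2' : (π v).1 ≤ (π u).1 := h2
      have hne' : (π u).1 ≠ (π v).1 := fun h => hne (Fin.ext h)
      exact ⟨by omega, h3⟩
    · intro u1 _ u2 _ h
      exact π.injective (Fin.ext h)
  rw [Nat.card_Ico] at hmid
  have hltv : (π v).1 < (τ v).1 := hlt
  omega

lemma code_injective : Function.Injective (fun π : Equiv.Perm (Fin n) => code π) := by
  intro π τ h
  have hc : ∀ v, code π v = code τ v := fun v => congrFun h v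
  have H : ∀ k, ∀ v : Fin n, v.1 < k → π v = τ v := by
    intro k
    induction k with
    | zero => intro v hv; omega
    | succ m ih =>
      intro v hv
      rcases Nat.lt_succ_iff_lt_or_eq.mp hv with h' | h'
      · exact ih v h'
      · have hprev : ∀ u, u < v → π u = τ u := by
          intro u hu
          exact ih u (by have := Fin.lt_def.mp hu; omega)
        rcases lt_trichotomy (π v) (τ v) with hlt | heq | hgt
        · exact absurd (code_inj_aux π τ v (hc v) hprev hlt) id
        · exact heq
        · have hprev' : ∀ u, u < v → τ u = π u := fun u hu => (hprev u hu).symm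
          exact absurd (code_inj_aux τ π v (hc v).symm hprev' hgt) id
  apply Equiv.ext
  intro v
  exact H (v.1 + 1) v (Nat.lt_succ_self _)

def codeF (π : Equiv.Perm (Fin n)) : (v : Fin n) → Fin (n - v.1) :=
  fun v => ⟨code π v, code_lt π v⟩

lemma codeF_injective : Function.Injective (codeF (n := n)) := by
  intro π τ h
  apply code_injective
  funext v
  have := congrFun h v
  simpa [codeF, Fin.ext_iff] using this

lemma card_eq_aux : Fintype.card (Equiv.Perm (Fin n)) = Fintype.card ((v : Fin n) → Fin (n - v.1)) := by
  rw [Fintype.card_perm, Fintype.card_pi, Fintype.card_fin]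
  simp only [Fintype.card_fin]
  rw [Fin.prod_univ_eq_prod_range (fun j => n - j) n]
  rw [← Finset.prod_range_reflect (fun j => n - j) n]
  have : ∀ j ∈ Finset.range n, n - (n - 1 - j) = j + 1 := by
    intro j hj
    rw [Finset.mem_range] at hj
    omega
  rw [Finset.prod_congr rfl this]
  have hfact : ∀ N : ℕ, N.factorial = ∏ x ∈ Finset.range N, (x + 1) := by
    intro N
    induction N with
    | zero => simp
    | succ m ih => rw [Finset.prod_range_succ, ← ih, Nat.factorial_succ, Nat.mul_comm]
  exact hfact n

noncomputable def lehmer : Equiv.Perm (Fin n) ≃ ((v : Fin n) → Fin (n - v.1)) :=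
  Equiv.ofBijective codeF
    ((Fintype.bijective_iff_injective_and_card _).mpr ⟨codeF_injective, card_eq_aux⟩)

lemma lehmer_apply (π : Equiv.Perm (Fin n)) (v : Fin n) :
    (lehmer π v).1 = code π v := rfl


/-- flip coordinate `i` of a Lehmer code. -/
def flip (i : Fin n) (g : (v : Fin n) → Fin (n - v.1)) : (v : Fin n) → Fin (n - v.1) :=
  Function.update g i ⟨(n - 1 - i.1) - (g i).1, by have := (g i).2; omega⟩

lemma flip_flip (i : Fin n) (g : (v : Fin n) → Fin (n - v.1)) : flip i (flip i g) = g := by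
  funext v
  by_cases hv : v = i
  · subst hv
    simp only [flip, Function.update_self]
    apply Fin.ext
    simp only [Fin.val_mk]
    have h1 : (g v).1 < n - v.1 := (g v).2
    have := v.2
    omega
  · simp only [flip, Function.update_of_ne hv]

lemma flip_at (i : Fin n) (g : (v : Fin n) → Fin (n - v.1)) :
    (flip i g i).1 = (n - 1 - i.1) - (g i).1 := by
  simp [flip]

lemma sum_flip (i : Fin n) (g : (v : Fin n) → Fin (n - v.1)) :
    ∑ v, ((flip i g) v).1 + (g i).1
      = ∑ v, (g v).1 + ((n - 1 - i.1) - (g i).1) := by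
  have h1 : (fun v => ((flip i g) v).1)
      = Function.update (fun v => (g v).1) i ((n - 1 - i.1) - (g i).1) := by
    funext v
    exact Function.apply_update (fun a (x : Fin (n - a.1)) => x.1) g i _ v
  rw [h1, Finset.sum_update_of_mem (Finset.mem_univ i)]
  have h2 : ∑ v, (g v).1 = (g i).1 + ∑ v ∈ Finset.univ \ {i}, (g v).1 :=
    Finset.sum_eq_add_sum_sdiff_singleton_of_mem (Finset.mem_univ i) _
  omega

/-- The involution on pairs. -/
noncomputable def T : Equiv.Perm (Fin n) × Fin n → Equiv.Perm (Fin n) × Fin n :=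
  fun p => (lehmer.symm (flip p.2 (lehmer p.1)), p.2)

lemma T_T (p : Equiv.Perm (Fin n) × Fin n) : T (T p) = p := by
  obtain ⟨π, i⟩ := p
  simp only [T, Equiv.apply_symm_apply, flip_flip, Equiv.symm_apply_apply]

lemma code_keyZ (π : Equiv.Perm (Fin n)) (i : Fin n) :
    (inversions (π * cyc i) : ℤ)
      = inversions π + (n - 1 - i.1 : ℕ) - 2 * code π i := by
  have h1 := key π i
  have h2 := code_add_acode π i
  omega

lemma inv_T1 (π : Equiv.Perm (Fin n)) (i : Fin n) :
    (inversions ((T (π, i)).1) : ℤ) = inversions (π * cyc i) := by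
  set σ := (T (π, i)).1 with hσ
  have hcode : lehmer σ = flip i (lehmer π) := by
    rw [hσ]; simp [T]
  have h1 : inversions σ = ∑ v, (lehmer σ v).1 := by
    rw [inversions_eq_sum_code]
    exact Finset.sum_congr rfl fun v _ => (lehmer_apply σ v).symm
  have h2 : inversions π = ∑ v, (lehmer π v).1 := by
    rw [inversions_eq_sum_code]
    exact Finset.sum_congr rfl fun v _ => (lehmer_apply π v).symm
  have h3 := sum_flip i (lehmer π)
  have h4 := code_keyZ π i
  have h5 : (lehmer π i).1 = code π i := lehmer_apply π i
  have h6 : code π i + acode π i = n - 1 - i.1 := code_add_acode π i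
  rw [hcode] at h1
  omega

lemma code_T (π : Equiv.Perm (Fin n)) (i : Fin n) :
    code ((T (π, i)).1) i = (n - 1 - i.1) - code π i := by
  have hcode : lehmer ((T (π, i)).1) = flip i (lehmer π) := by simp [T]
  have := lehmer_apply ((T (π, i)).1) i
  rw [hcode, flip_at, lehmer_apply] at this
  omega

lemma inv_T2 (π : Equiv.Perm (Fin n)) (i : Fin n) :
    (inversions ((T (π, i)).1 * cyc i) : ℤ) = inversions π := by
  have h1 := code_keyZ ((T (π, i)).1) i
  have h2 := inv_T1 π i
  have h3 := code_T π i
  have h4 := code_keyZ π i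
  have h5 := code_add_acode π i
  omega

end Inv11

/-- For `n ≥ 2`, with `π` uniform on `S_n` and `I` uniform on `{1,…,n}`,
the pair `(Inv(π⁻¹), Inv((π∘c_I)⁻¹))` is exchangeable. -/
theorem inversions_pair_exchangeable {n : ℕ} (hn : 2 ≤ n) :
    ∀ a b : ℤ,
      Nat.card {p : Equiv.Perm (Fin n) × Fin n //
          (inversions p.1⁻¹ : ℤ) = a ∧ (inversions ((p.1 * cyc p.2)⁻¹) : ℤ) = b}
        = Nat.card {p : Equiv.Perm (Fin n) × Fin n //
          (inversions p.1⁻¹ : ℤ) = b ∧ (inversions ((p.1 * cyc p.2)⁻¹) : ℤ) = a} := by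
  intro a b
  apply Nat.card_congr
  have cond : ∀ (x y : ℤ) (p : Equiv.Perm (Fin n) × Fin n),
      ((inversions p.1⁻¹ : ℤ) = x ∧ (inversions ((p.1 * cyc p.2)⁻¹) : ℤ) = y) →
      ((inversions (Inv11.T p).1⁻¹ : ℤ) = y ∧
        (inversions (((Inv11.T p).1 * cyc (Inv11.T p).2)⁻¹) : ℤ) = x) := by
    rintro x y ⟨π, i⟩ ⟨h1, h2⟩
    rw [Inv11.inversions_inv] at h1 h2
    rw [show (Inv11.T (π, i)).2 = i from rfl]
    constructor
    · rw [Inv11.inversions_inv, Inv11.inv_T1 π i]; exact h2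
    · rw [Inv11.inversions_inv, Inv11.inv_T2 π i]; exact h1
  refine ⟨fun q => ⟨Inv11.T q.1, cond a b q.1 q.2⟩,
          fun q => ⟨Inv11.T q.1, cond b a q.1 q.2⟩, ?_, ?_⟩
  · rintro ⟨p, hp⟩; exact Subtype.ext (Inv11.T_T p)
  · rintro ⟨p, hp⟩; exact Subtype.ext (Inv11.T_T p)
end
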